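/- arXiv:1610.06047 — 12 statements merged into one kernel-verified Lean document; each statement's English description precedes it below -/
import Mathlib

section
/- Let G be a finite abelian group with a complete set of irreducible characters \(\widehat{G}\), and let \(x_g\) for \(g \in G\) be commuting variables. Then the group determinant satisfies \(\Theta(G) = \prod_{\chi \in \widehat{G}} \sum_{g \in G} \chi(g) x_g\). -/
open Matrix MvPolynomial

/-- **Dedekind's theorem.** For a finite abelian group `G`, the group determinant
`Θ(G) = det (x_{g h⁻¹})` factors as the product over all complex characters `χ` of `G`
of the linear forms `∑ g, χ(g) x_g`. -/
theorem dedekind_group_determinant (G : Type*) [CommGroup G] [Fintype G] [DecidableEq G]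
    [Fintype (G →* ℂˣ)] :
    Matrix.det (Matrix.of fun g h : G => (MvPolynomial.X (g * h⁻¹) : MvPolynomial G ℂ)) =
      ∏ χ : G →* ℂˣ, ∑ g : G,
        MvPolynomial.C ((χ g : ℂ)) * MvPolynomial.X g := by
  classical
  have hexp : NeZero ((Monoid.exponent G : ℂ)) :=
    ⟨Nat.cast_ne_zero.mpr Monoid.exponent_ne_zero_of_finite⟩
  obtain ⟨e⟩ := CommGroup.monoidHom_mulEquiv_of_hasEnoughRootsOfUnity G ℂ
  set σ : G ≃ (G →* ℂˣ) := e.symm.toEquiv with hσ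
  set R := MvPolynomial G ℂ
  set M : Matrix G G R := Matrix.of fun g h : G => (X (g * h⁻¹) : R) with hM
  set lam : (G →* ℂˣ) → R := fun χ => ∑ g : G, C ((χ g : ℂ)) * X g with hlam
  set Q₀ : Matrix G G ℂ := Matrix.of fun h i : G => ((σ i) h⁻¹ : ℂ) with hQ₀
  set Q : Matrix G G R := Q₀.map (C : ℂ →+* R) with hQ
  -- key eigen relation
  have key : M * Q = Q * Matrix.diagonal (fun i => lam (σ i)) := by
    refine Matrix.ext fun g i => ?_
    rw [Matrix.mul_diagonal, Matrix.mul_apply]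
    have step : (Q g i) * lam (σ i) = ∑ k : G, X k * C (((σ i) (g⁻¹ * k) : ℂ)) := by
      rw [hlam, Finset.mul_sum]
      refine Finset.sum_congr rfl fun k _ => ?_
      show (C (((σ i) g⁻¹ : ℂ)) : R) * (C (((σ i) k : ℂ)) * X k) = _
      rw [← mul_assoc, ← C_mul, ← Units.val_mul, ← MonoidHom.map_mul (σ i), mul_comm (X k)]
    rw [step]
    refine Fintype.sum_equiv ((Equiv.inv G).trans (Equiv.mulLeft g)) _ _ fun h => ?_
    show (X (g * h⁻¹) : R) * C (((σ i) h⁻¹ : ℂ)) = X (g * h⁻¹) * C (((σ i) (g⁻¹ * (g * h⁻¹)) : ℂ))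
    rw [inv_mul_cancel_left]
  -- nonvanishing of character table determinant
  have hdet : Q₀.det ≠ 0 := by
    intro h0
    obtain ⟨v, hv, hv0⟩ := Matrix.exists_mulVec_eq_zero_iff.mpr h0
    apply hv
    have li : LinearIndependent ℂ
        (fun i : G => ((((Units.coeHom ℂ).comp ((σ i)⁻¹) : G →* ℂ) : G → ℂ))) := by
      refine (linearIndependent_monoidHom G ℂ).comp
        (fun i => (Units.coeHom ℂ).comp ((σ i)⁻¹)) fun i j hij => ?_
      apply σ.injective
      have h2 : ∀ g : G, (((σ i)⁻¹ g : ℂˣ) : ℂ) = (((σ j)⁻¹ g : ℂˣ) : ℂ) :=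
        fun g => DFunLike.congr_fun hij g
      refine inv_injective (MonoidHom.ext fun g => Units.ext (h2 g))
    have := Fintype.linearIndependent_iff.mp li v ?_
    · exact funext this
    · funext h
      have h3 := congrFun hv0 h
      simp only [Matrix.mulVec, dotProduct, hQ₀, Matrix.of_apply, Pi.zero_apply] at h3
      simp only [Finset.sum_apply, Pi.smul_apply, Pi.zero_apply, smul_eq_mul]
      rw [← h3]
      refine Finset.sum_congr rfl fun x _ => ?_
      simp only [MonoidHom.coe_comp, Function.comp_apply, Units.coeHom_apply]
      rw [mul_comm]
      congr 1
      rw [MonoidHom.inv_apply, ← map_inv]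
  -- conclude by cancelling the invertible character-table determinant
  have hQdet : Q.det = C Q₀.det := (RingHom.map_det (C : ℂ →+* R) Q₀).symm
  have hQne : Q.det ≠ 0 := by
    rw [hQdet]
    exact fun h => hdet (by simpa using h)
  have hdets := congrArg Matrix.det key
  rw [Matrix.det_mul, Matrix.det_mul, Matrix.det_diagonal, mul_comm Q.det] at hdets
  have hfin : M.det = ∏ i : G, lam (σ i) := mul_right_cancel₀ hQne hdets
  exact hfin.trans (Equiv.prod_comp σ lam)
end

section
/- Let H be a normal subgroup of G of finite index, T a complete set of left coset representatives, \(L_T\) the left regular representation \(\mathrm{Mat}(m, RG) \to \mathrm{Mat}(m[G:H], RH)\), and \(L_{G/H}\) the left regular representation of the quotient group G/H. For \(A = \sum_{t \in T} t A_t\) with \(A_t \in \mathrm{Mat}(m, RH)\), we have \(L_T(A) = P^{-1} \left(\sum_{t \in T} L_{G/H}(tH) \otimes t A_t\right) P\), where P is the block diagonal matrix with blocks \(t_1 I_m, \ldots, t_{[G:H]} I_m\) and \(\otimes\) is the Kronecker product. -/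
section Aux

variable {R : Type*} [CommRing R] {G : Type*} [Group G]

private lemma mem_of_mapDomain_ne_zero (H : Subgroup G) (a : MonoidAlgebra R ↥H) (g : G)
    (h : (MonoidAlgebra.mapDomainRingHom R H.subtype a).coeff g ≠ 0) : g ∈ H := by
  classical
  have hsupp : g ∈ (Finsupp.mapDomain (H.subtype) a.coeff).support := by
    exact Finsupp.mem_support_iff.mpr h
  have := Finsupp.mapDomain_support hsupp
  simp only [Finset.mem_image] at this
  obtain ⟨x, -, rfl⟩ := this
  exact x.2

private lemma supp_helper (H : Subgroup G) [H.Normal] (g1 g2 : G) (hg : g1 * g2 ∈ H)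
    (a : MonoidAlgebra R ↥H) (g : G)
    (h : (MonoidAlgebra.of R G g1 * MonoidAlgebra.mapDomainRingHom R H.subtype a *
      MonoidAlgebra.of R G g2).coeff g ≠ 0) : g ∈ H := by
  rw [MonoidAlgebra.of_apply, MonoidAlgebra.of_apply, MonoidAlgebra.coeff_mul_single_apply,
    MonoidAlgebra.coeff_single_mul_apply, one_mul, mul_one] at h
  have hmem : g1⁻¹ * (g * g2⁻¹) ∈ H := mem_of_mapDomain_ne_zero H _ _ h
  have hrw : g = (g1 * g2) * (g2⁻¹ * (g1⁻¹ * (g * g2⁻¹)) * g2) := by group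
  rw [hrw]
  exact H.mul_mem hg (Subgroup.Normal.conj_mem' ‹H.Normal› _ hmem g2)

private lemma coset_cancel {r : ℕ} (H : Subgroup G) (T : Fin r → G)
    (hT : ∀ g : G, ∃! i : Fin r, (T i)⁻¹ * g ∈ H)
    (x y : Fin r → MonoidAlgebra R G)
    (hx : ∀ j g, (x j).coeff g ≠ 0 → g ∈ H) (hy : ∀ j g, (y j).coeff g ≠ 0 → g ∈ H)
    (h : ∑ j, MonoidAlgebra.of R G (T j) * x j = ∑ j, MonoidAlgebra.of R G (T j) * y j) :
    x = y := by
  have key : ∀ (z : Fin r → MonoidAlgebra R G), (∀ j g, (z j).coeff g ≠ 0 → g ∈ H) →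
      ∀ (j : Fin r) (g : G), g ∈ H →
      (∑ j', MonoidAlgebra.of R G (T j') * z j').coeff (T j * g) = (z j).coeff g := by
    intro z hz j g hg
    rw [MonoidAlgebra.coeff_sum, Finset.sum_apply']
    rw [Finset.sum_eq_single j]
    · rw [MonoidAlgebra.of_apply, MonoidAlgebra.coeff_single_mul_apply, one_mul, inv_mul_cancel_left]
    · intro j' _ hj'
      rw [MonoidAlgebra.of_apply, MonoidAlgebra.coeff_single_mul_apply, one_mul]
      by_contra hne
      have h1 : (T j')⁻¹ * (T j * g) ∈ H := hz j' _ hne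
      have h2 : (T j)⁻¹ * (T j * g) ∈ H := by simpa using hg
      obtain ⟨i0, -, hu⟩ := hT (T j * g)
      exact hj' ((hu j' h1).trans (hu j h2).symm)
    · intro hj; exact absurd (Finset.mem_univ j) hj
  funext j
  ext g
  by_cases hg : g ∈ H
  · have h' : (∑ j', MonoidAlgebra.of R G (T j') * x j').coeff (T j * g)
        = (∑ j', MonoidAlgebra.of R G (T j') * y j').coeff (T j * g) := by rw [h]
    rw [key x hx j g hg, key y hy j g hg] at h'
    exact h'
  · have h1 : (x j).coeff g = 0 := by by_contra hc; exact hg (hx j g hc)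
    have h2 : (y j).coeff g = 0 := by by_contra hc; exact hg (hy j g hc)
    rw [h1, h2]

end Aux

/-- For a normal subgroup `H` of `G` with complete set `T` of left coset representatives,
the left regular representation satisfies
`L_T(A) = P⁻¹ (∑ t, L_{G/H}(tH) ⊗ t Aₜ) P`, where `P` is the block diagonal matrix with
blocks `tᵢ Iₘ`, `L_{G/H}` is the regular permutation representation of `G/H`, and `⊗` is
the Kronecker product. (Stated inside `RG` via the canonical embedding `RH → RG`.) -/
theorem regular_rep_kronecker {R : Type*} [CommRing R] {G : Type*} [Group G]
    (H : Subgroup G) [H.Normal] [DecidableEq (G ⧸ H)] {m r : ℕ}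
    (T : Fin r → G) (hT : ∀ g : G, ∃! i : Fin r, (T i)⁻¹ * g ∈ H)
    (L : Matrix (Fin m) (Fin m) (MonoidAlgebra R G) →
      Matrix (Fin r × Fin m) (Fin r × Fin m) (MonoidAlgebra R ↥H))
    (hL : ∀ A, A * Matrix.of (fun (i : Fin m) (p : Fin r × Fin m) =>
        if i = p.2 then MonoidAlgebra.of R G (T p.1) else 0)
      = Matrix.of (fun (i : Fin m) (p : Fin r × Fin m) =>
        if i = p.2 then MonoidAlgebra.of R G (T p.1) else 0)
        * (L A).map (MonoidAlgebra.mapDomainRingHom R H.subtype))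
    (A : Matrix (Fin m) (Fin m) (MonoidAlgebra R G))
    (At : Fin r → Matrix (Fin m) (Fin m) (MonoidAlgebra R ↥H))
    (hA : A = ∑ t : Fin r, MonoidAlgebra.of R G (T t) •
      (At t).map (MonoidAlgebra.mapDomainRingHom R H.subtype)) :
    (L A).map (MonoidAlgebra.mapDomainRingHom R H.subtype) =
      (Matrix.of fun p q : Fin r × Fin m =>
          if p = q then MonoidAlgebra.of R G ((T p.1)⁻¹) else 0) *
      (∑ t : Fin r, Matrix.kroneckerMap (· * ·)
          (Matrix.of fun i j : Fin r =>
            if (QuotientGroup.mk (T i) : G ⧸ H) = QuotientGroup.mk (T t * T j)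
            then (1 : MonoidAlgebra R G) else 0)
          (MonoidAlgebra.of R G (T t) •
            (At t).map (MonoidAlgebra.mapDomainRingHom R H.subtype))) *
      (Matrix.of fun p q : Fin r × Fin m =>
          if p = q then MonoidAlgebra.of R G (T p.1) else 0) := by
  classical
  set φ := MonoidAlgebra.mapDomainRingHom R H.subtype with hφ
  set e : G → MonoidAlgebra R G := fun g => MonoidAlgebra.of R G g with he
  set X : Matrix (Fin r × Fin m) (Fin r × Fin m) (MonoidAlgebra R G) := (L A).map φ with hX
  set Y : Matrix (Fin r × Fin m) (Fin r × Fin m) (MonoidAlgebra R G) :=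
      (Matrix.of fun p q : Fin r × Fin m =>
          if p = q then MonoidAlgebra.of R G ((T p.1)⁻¹) else 0) *
      (∑ t : Fin r, Matrix.kroneckerMap (· * ·)
          (Matrix.of fun i j : Fin r =>
            if (QuotientGroup.mk (T i) : G ⧸ H) = QuotientGroup.mk (T t * T j)
            then (1 : MonoidAlgebra R G) else 0)
          (MonoidAlgebra.of R G (T t) • (At t).map φ)) *
      (Matrix.of fun p q : Fin r × Fin m =>
          if p = q then MonoidAlgebra.of R G (T p.1) else 0) with hYdef
  show X = Y
  have hofmul : ∀ g g' : G, e g * e g' = e (g * g') := fun g g' => (map_mul _ _ _).symm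
  -- explicit formula for entries of Y
  have hY : ∀ p q : Fin r × Fin m, Y p q =
      ∑ t : Fin r, if (QuotientGroup.mk (T p.1) : G ⧸ H) = QuotientGroup.mk (T t * T q.1)
        then e ((T p.1)⁻¹ * T t) * φ (At t p.2 q.2) * e (T q.1) else 0 := by
    intro p q
    have hd1 : (Matrix.of fun p q : Fin r × Fin m =>
        if p = q then MonoidAlgebra.of R G ((T p.1)⁻¹) else 0)
        = Matrix.diagonal (fun p : Fin r × Fin m => e ((T p.1)⁻¹)) := by
      ext a b; simp [Matrix.diagonal_apply, he]
    have hd2 : (Matrix.of fun p q : Fin r × Fin m =>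
        if p = q then MonoidAlgebra.of R G (T p.1) else 0)
        = Matrix.diagonal (fun p : Fin r × Fin m => e (T p.1)) := by
      ext a b; simp [Matrix.diagonal_apply, he]
    rw [hYdef, hd1, hd2, Matrix.mul_diagonal, Matrix.diagonal_mul, Matrix.sum_apply]
    rw [Finset.mul_sum, Finset.sum_mul]
    refine Finset.sum_congr rfl fun t _ => ?_
    rw [Matrix.kroneckerMap_apply]
    simp only [Matrix.of_apply, Matrix.smul_apply, Matrix.map_apply, smul_eq_mul]
    split_ifs with hc
    · simp [he, map_mul, mul_assoc]
      simp [← mul_assoc, MonoidAlgebra.single_mul_single]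
    · rw [zero_mul, mul_zero, zero_mul]
  -- supports
  have hxsupp : ∀ (p q : Fin r × Fin m) (g : G), (X p q).coeff g ≠ 0 → g ∈ H :=
    fun p q g h => mem_of_mapDomain_ne_zero H (L A p q) g h
  have hysupp : ∀ (p q : Fin r × Fin m) (g : G), (Y p q).coeff g ≠ 0 → g ∈ H := by
    intro p q g h
    rw [hY, MonoidAlgebra.coeff_sum, Finset.sum_apply'] at h
    obtain ⟨t, -, ht⟩ := Finset.exists_ne_zero_of_sum_ne_zero h
    by_cases hc : (QuotientGroup.mk (T p.1) : G ⧸ H) = QuotientGroup.mk (T t * T q.1)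
    · rw [if_pos hc] at ht
      have hc' : (T p.1)⁻¹ * (T t * T q.1) ∈ H := (QuotientGroup.eq ).mp hc
      refine supp_helper H ((T p.1)⁻¹ * T t) (T q.1) ?_ (At t p.2 q.2) g ?_
      · rw [mul_assoc]; exact hc'
      · rw [← hofmul] at ht
        simpa [he, hφ] using ht
    · rw [if_neg hc] at ht
      simp at ht
  -- the key sums
  have hsum : ∀ (i : Fin m) (q : Fin r × Fin m),
      ∑ j, e (T j) * X (j, i) q = ∑ j, e (T j) * Y (j, i) q := by
    intro i q
    have hLent := congrFun (congrFun (hL A) i) q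
    -- left side equals (A * Φ) i q
    have hleft : ∑ j, e (T j) * X (j, i) q = A i q.2 * e (T q.1) := by
      have : (Matrix.of (fun (i : Fin m) (p : Fin r × Fin m) =>
          if i = p.2 then MonoidAlgebra.of R G (T p.1) else 0) * X) i q
          = ∑ j, e (T j) * X (j, i) q := by
        rw [Matrix.mul_apply, Fintype.sum_prod_type]
        refine Finset.sum_congr rfl fun j _ => ?_
        rw [Finset.sum_eq_single i]
        · simp [he]
        · intro k _ hk; simp [Matrix.of_apply, if_neg (Ne.symm hk)]
        · intro hi; exact absurd (Finset.mem_univ i) hi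
      rw [← this, ← hLent, Matrix.mul_apply]
      rw [Finset.sum_eq_single q.2]
      · simp [he]
      · intro l _ hl; simp [Matrix.of_apply, if_neg hl]
      · intro hi; exact absurd (Finset.mem_univ q.2) hi
    have hright : ∑ j, e (T j) * Y (j, i) q = A i q.2 * e (T q.1) := by
      have step1 : ∀ j : Fin r, e (T j) * Y (j, i) q =
          ∑ t : Fin r, if (QuotientGroup.mk (T j) : G ⧸ H) = QuotientGroup.mk (T t * T q.1)
            then e (T t) * φ (At t i q.2) * e (T q.1) else 0 := by
        intro j
        rw [hY, Finset.mul_sum]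
        refine Finset.sum_congr rfl fun t _ => ?_
        rw [mul_ite, mul_zero]
        refine if_congr Iff.rfl ?_ rfl
        rw [← mul_assoc, ← mul_assoc, hofmul, mul_inv_cancel_left]
      rw [Finset.sum_congr rfl fun j _ => step1 j, Finset.sum_comm]
      have step2 : ∀ t : Fin r,
          (∑ j : Fin r, if (QuotientGroup.mk (T j) : G ⧸ H) = QuotientGroup.mk (T t * T q.1)
            then e (T t) * φ (At t i q.2) * e (T q.1) else 0)
          = e (T t) * φ (At t i q.2) * e (T q.1) := by
        intro t
        obtain ⟨j0, hj0, hu⟩ := hT (T t * T q.1)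
        rw [Finset.sum_eq_single j0]
        · rw [if_pos ((QuotientGroup.eq).mpr hj0)]
        · intro j _ hj
          rw [if_neg]
          intro hc
          exact hj (hu j ((QuotientGroup.eq).mp hc))
        · intro hi; exact absurd (Finset.mem_univ j0) hi
      rw [Finset.sum_congr rfl fun t _ => step2 t, ← Finset.sum_mul]
      congr 1
      have := congrFun (congrFun hA i) q.2
      rw [this, Matrix.sum_apply]
      refine Finset.sum_congr rfl fun t _ => ?_
      rw [Matrix.smul_apply, smul_eq_mul, Matrix.map_apply]
    rw [hleft, hright]
  -- conclude entrywise via cancellation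
  refine Matrix.ext fun p q => ?_
  have := coset_cancel H T hT (fun j => X (j, p.2) q) (fun j => Y (j, p.2) q)
    (fun j g h => hxsupp (j, p.2) q g h) (fun j g h => hysupp (j, p.2) q g h) (hsum p.2 q)
  exact congrFun this p.1
end

section
/- Let G/H be a finite abelian quotient group (H normal in G of finite index), and \(L_T\) the left regular representation \(\mathrm{Mat}(m, RG) \to \mathrm{Mat}(m[G:H], RH)\). Define \(J_t = P^{-1}(L_{G/H}(tH) \otimes I_m) P\) for each coset representative t. Then \(L_T(A) J_t = J_t L_T(A)\) for all \(A \in \mathrm{Mat}(m, RG)\) and all \(t \in T\). -/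
open MonoidAlgebra

section
variable {R : Type*} [CommRing R] {G : Type*} [Group G] (H : Subgroup G)

/-- `f` is supported in the coset `c`. -/
def RRCJ.SuppIn (c : G ⧸ H) (f : MonoidAlgebra R G) : Prop :=
  ∀ g : G, f.coeff g ≠ 0 → (QuotientGroup.mk g : G ⧸ H) = c

namespace RRCJ

variable {H} [H.Normal]

omit [H.Normal] in
theorem suppIn_sub {c : G ⧸ H} {f f' : MonoidAlgebra R G}
    (hf : SuppIn H c f) (hf' : SuppIn H c f') : SuppIn H c (f - f') := by
  intro g hg
  rw [MonoidAlgebra.coeff_sub, Finsupp.sub_apply] at hg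
  rcases eq_or_ne (f.coeff g) 0 with h | h
  · exact hf' g (by intro h'; apply hg; rw [h, h', sub_zero])
  · exact hf g h

omit [H.Normal] in
theorem suppIn_sum {c : G ⧸ H} {ι : Type*} (s : Finset ι) (f : ι → MonoidAlgebra R G)
    (hf : ∀ i ∈ s, SuppIn H c (f i)) : SuppIn H c (∑ i ∈ s, f i) := by
  intro g hg
  rw [MonoidAlgebra.coeff_sum, Finset.sum_apply'] at hg
  obtain ⟨i, hi, hne⟩ := Finset.exists_ne_zero_of_sum_ne_zero hg
  exact hf i hi g hne

theorem suppIn_mul {c d : G ⧸ H} {f f' : MonoidAlgebra R G}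
    (hf : SuppIn H c f) (hf' : SuppIn H d f') : SuppIn H (c * d) (f * f') := by
  classical
  intro g hg
  by_contra hne
  apply hg
  rw [MonoidAlgebra.coeff_mul, Finsupp.sum]
  refine Finset.sum_eq_zero fun a ha => ?_
  rw [Finsupp.sum]
  refine Finset.sum_eq_zero fun b hb => ?_
  rw [if_neg]
  intro hab
  apply hne
  subst hab
  rw [QuotientGroup.mk_mul, hf a (Finsupp.mem_support_iff.1 ha),
    hf' b (Finsupp.mem_support_iff.1 hb)]

theorem suppIn_matMul {c d : G ⧸ H} {n : Type*} [Fintype n]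
    {M N : Matrix n n (MonoidAlgebra R G)}
    (hM : ∀ p q, SuppIn H c (M p q)) (hN : ∀ p q, SuppIn H d (N p q)) :
    ∀ p q, SuppIn H (c * d) ((M * N) p q) := by
  intro p q
  rw [Matrix.mul_apply]
  exact suppIn_sum _ _ fun k _ => suppIn_mul (hM p k) (hN k q)

theorem cancel {m r : ℕ} (T : Fin r → G)
    (hTinj : Function.Injective fun i : Fin r => (QuotientGroup.mk (T i) : G ⧸ H))
    (c : G ⧸ H) (W : Matrix (Fin r × Fin m) (Fin r × Fin m) (MonoidAlgebra R G))
    (hW : ∀ p q, SuppIn H c (W p q))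
    (hEW : Matrix.of (fun (i : Fin m) (p : Fin r × Fin m) =>
        if i = p.2 then MonoidAlgebra.of R G (T p.1) else 0) * W = 0) : W = 0 := by
  ext ⟨j₀, i⟩ q x
  simp only [Matrix.zero_apply, MonoidAlgebra.coeff_zero, Finsupp.coe_zero, Pi.zero_apply]
  rcases eq_or_ne (QuotientGroup.mk x : G ⧸ H) c with hx | hx
  swap
  · by_contra h; exact hx (hW _ _ x h)
  have h0 : (∑ j : Fin r, MonoidAlgebra.of R G (T j) * W (j, i) q) = 0 := by
    have h := Matrix.ext_iff.mpr hEW i q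
    simpa [Matrix.mul_apply, Fintype.sum_prod_type, ite_mul, zero_mul,
      Finset.sum_ite_eq] using h
  have h1 : (∑ j : Fin r, MonoidAlgebra.of R G (T j) * W (j, i) q).coeff (T j₀ * x) = 0 := by
    rw [h0]; simp
  rw [MonoidAlgebra.coeff_sum, Finset.sum_apply'] at h1
  rw [Finset.sum_eq_single j₀] at h1
  · rw [MonoidAlgebra.of_apply, MonoidAlgebra.single_mul_apply, one_mul,
      inv_mul_cancel_left] at h1
    exact h1
  · intro b _ hb
    rw [MonoidAlgebra.of_apply, MonoidAlgebra.single_mul_apply, one_mul]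
    by_contra hne
    have hmk := hW _ _ _ hne
    rw [QuotientGroup.mk_mul, QuotientGroup.mk_mul, QuotientGroup.mk_inv, hx] at hmk
    have : (QuotientGroup.mk (T b) : G ⧸ H) = QuotientGroup.mk (T j₀) := by
      have h2 : ((QuotientGroup.mk (T b) : G ⧸ H))⁻¹ * QuotientGroup.mk (T j₀) = 1 := by
        have := mul_right_cancel (b := c)
          (by rw [← mul_assoc] at hmk; rw [hmk, one_mul] :
            ((QuotientGroup.mk (T b) : G ⧸ H))⁻¹ * QuotientGroup.mk (T j₀) * c = 1 * c)
        exact this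
      rwa [inv_mul_eq_one] at h2
    exact hb (hTinj this)
  · simp

end RRCJ
end

/-- If `H` is normal in `G` with `G/H` abelian, then the image of the left regular
representation `L_T` commutes with each `Jₜ = P⁻¹ (L_{G/H}(tH) ⊗ Iₘ) P`.
(Stated inside `RG` via the canonical embedding `RH → RG`.) -/
theorem regular_rep_commutes_J {R : Type*} [CommRing R] {G : Type*} [Group G]
    (H : Subgroup G) [H.Normal] [DecidableEq (G ⧸ H)]
    (hab : ∀ a b : G ⧸ H, a * b = b * a) {m r : ℕ}
    (T : Fin r → G) (hT : ∀ g : G, ∃! i : Fin r, (T i)⁻¹ * g ∈ H)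
    (L : Matrix (Fin m) (Fin m) (MonoidAlgebra R G) →
      Matrix (Fin r × Fin m) (Fin r × Fin m) (MonoidAlgebra R ↥H))
    (hL : ∀ A, A * Matrix.of (fun (i : Fin m) (p : Fin r × Fin m) =>
        if i = p.2 then MonoidAlgebra.of R G (T p.1) else 0)
      = Matrix.of (fun (i : Fin m) (p : Fin r × Fin m) =>
        if i = p.2 then MonoidAlgebra.of R G (T p.1) else 0)
        * (L A).map (MonoidAlgebra.mapDomainRingHom R H.subtype)) :
    ∀ (A : Matrix (Fin m) (Fin m) (MonoidAlgebra R G)) (t : Fin r),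
      (L A).map (MonoidAlgebra.mapDomainRingHom R H.subtype) *
        ((Matrix.of fun p q : Fin r × Fin m =>
            if p = q then MonoidAlgebra.of R G ((T p.1)⁻¹) else 0) *
          Matrix.kroneckerMap (· * ·)
            (Matrix.of fun i j : Fin r =>
              if (QuotientGroup.mk (T i) : G ⧸ H) = QuotientGroup.mk (T t * T j)
              then (1 : MonoidAlgebra R G) else 0)
            (1 : Matrix (Fin m) (Fin m) (MonoidAlgebra R G)) *
          (Matrix.of fun p q : Fin r × Fin m =>
            if p = q then MonoidAlgebra.of R G (T p.1) else 0)) =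
      ((Matrix.of fun p q : Fin r × Fin m =>
            if p = q then MonoidAlgebra.of R G ((T p.1)⁻¹) else 0) *
          Matrix.kroneckerMap (· * ·)
            (Matrix.of fun i j : Fin r =>
              if (QuotientGroup.mk (T i) : G ⧸ H) = QuotientGroup.mk (T t * T j)
              then (1 : MonoidAlgebra R G) else 0)
            (1 : Matrix (Fin m) (Fin m) (MonoidAlgebra R G)) *
          (Matrix.of fun p q : Fin r × Fin m =>
            if p = q then MonoidAlgebra.of R G (T p.1) else 0)) *
        (L A).map (MonoidAlgebra.mapDomainRingHom R H.subtype) := by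
  intro A t
  classical
  set E : Matrix (Fin m) (Fin r × Fin m) (MonoidAlgebra R G) :=
    Matrix.of (fun (i : Fin m) (p : Fin r × Fin m) =>
      if i = p.2 then MonoidAlgebra.of R G (T p.1) else 0) with hEdef
  set Pinv : Matrix (Fin r × Fin m) (Fin r × Fin m) (MonoidAlgebra R G) :=
    Matrix.of fun p q : Fin r × Fin m =>
      if p = q then MonoidAlgebra.of R G ((T p.1)⁻¹) else 0 with hPinvdef
  set K : Matrix (Fin r × Fin m) (Fin r × Fin m) (MonoidAlgebra R G) :=
    Matrix.kroneckerMap (· * ·)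
      (Matrix.of fun i j : Fin r =>
        if (QuotientGroup.mk (T i) : G ⧸ H) = QuotientGroup.mk (T t * T j)
        then (1 : MonoidAlgebra R G) else 0)
      (1 : Matrix (Fin m) (Fin m) (MonoidAlgebra R G)) with hKdef
  set Pm : Matrix (Fin r × Fin m) (Fin r × Fin m) (MonoidAlgebra R G) :=
    Matrix.of fun p q : Fin r × Fin m =>
      if p = q then MonoidAlgebra.of R G (T p.1) else 0 with hPmdef
  set X : Matrix (Fin r × Fin m) (Fin r × Fin m) (MonoidAlgebra R G) :=
    (L A).map (MonoidAlgebra.mapDomainRingHom R H.subtype) with hXdef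
  have hTinj : Function.Injective fun i : Fin r => (QuotientGroup.mk (T i) : G ⧸ H) := by
    intro a b h
    obtain ⟨i₀, hi₀, hu⟩ := hT (T b)
    have ha : (T a)⁻¹ * T b ∈ H := QuotientGroup.eq.mp h
    have hb : (T b)⁻¹ * T b ∈ H := by simpa using H.one_mem
    exact (hu a ha).trans (hu b hb).symm
  set F : Matrix (Fin m) (Fin r × Fin m) (MonoidAlgebra R G) :=
    Matrix.of (fun (i : Fin m) (p : Fin r × Fin m) =>
      if i = p.2 then (1 : MonoidAlgebra R G) else 0) with hFdef
  have h1 : E * Pinv = F := by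
    refine Matrix.ext fun i q => ?_
    obtain ⟨j, k⟩ := q
    simp only [hEdef, hPinvdef, hFdef, Matrix.mul_apply, Matrix.of_apply,
      mul_ite, mul_zero, Finset.sum_ite_eq', Finset.mem_univ, if_true]
    split_ifs with h
    · rw [MonoidAlgebra.of_apply, MonoidAlgebra.of_apply,
        MonoidAlgebra.single_mul_single, mul_inv_cancel, one_mul,
        MonoidAlgebra.one_def]
    · rw [zero_mul]
  have key : ∀ j : Fin r,
      (∑ i' : Fin r, if (QuotientGroup.mk (T i') : G ⧸ H) = QuotientGroup.mk (T t * T j)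
        then (1 : MonoidAlgebra R G) else 0) = 1 := by
    intro j
    obtain ⟨i₀, hi₀, hu⟩ := hT (T t * T j)
    rw [Finset.sum_eq_single i₀]
    · rw [if_pos (QuotientGroup.eq.mpr hi₀)]
    · intro b _ hb
      rw [if_neg]
      intro hc
      exact hb (hu b (QuotientGroup.eq.mp hc))
    · simp
  have h2 : F * K = F := by
    refine Matrix.ext fun i q => ?_
    obtain ⟨j, l⟩ := q
    rw [Matrix.mul_apply, Fintype.sum_prod_type]
    simp only [hFdef, hKdef, Matrix.of_apply, Matrix.kroneckerMap_apply, Matrix.one_apply,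
      ite_mul, zero_mul, one_mul, Finset.sum_ite_eq, Finset.mem_univ, if_true]
    by_cases h : i = l
    · simp only [h, if_true, mul_one]
      exact key j
    · simp [h]
  have h3 : F * Pm = E := by
    refine Matrix.ext fun i q => ?_
    obtain ⟨j, k⟩ := q
    simp only [hFdef, hPmdef, hEdef, Matrix.mul_apply, Matrix.of_apply,
      mul_ite, mul_zero, Finset.sum_ite_eq', Finset.mem_univ, if_true,
      ite_mul, zero_mul, one_mul]
  have hEJ : E * (Pinv * K * Pm) = E := by
    rw [← Matrix.mul_assoc, ← Matrix.mul_assoc, h1, h2, h3]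
  have hJeq : Pinv * K * Pm = Matrix.of fun p q : Fin r × Fin m =>
      if (QuotientGroup.mk (T p.1) : G ⧸ H) = QuotientGroup.mk (T t * T q.1) ∧ p.2 = q.2
      then MonoidAlgebra.single ((T p.1)⁻¹ * T q.1) (1 : R) else 0 := by
    refine Matrix.ext fun p q => ?_
    obtain ⟨i, k⟩ := p
    obtain ⟨j, l⟩ := q
    rw [Matrix.mul_apply, Finset.sum_eq_single ((j, l) : Fin r × Fin m)]
    · rw [Matrix.mul_apply, Finset.sum_eq_single ((i, k) : Fin r × Fin m)]
      · simp only [hPinvdef, hKdef, hPmdef, Matrix.of_apply, Matrix.kroneckerMap_apply,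
          Matrix.one_apply, if_pos rfl]
        by_cases hc : (QuotientGroup.mk (T i) : G ⧸ H) = QuotientGroup.mk (T t * T j) <;>
          by_cases hkl : k = l <;>
          simp [hc, hkl, MonoidAlgebra.of_apply, MonoidAlgebra.single_mul_single, -QuotientGroup.mk_mul]
      · intro b _ hb
        rw [hPinvdef]
        simp only [Matrix.of_apply]
        rw [if_neg (fun hh => hb hh.symm), zero_mul]
      · simp
    · intro b _ hb
      rw [hPmdef]
      simp only [Matrix.of_apply]
      rw [if_neg hb, mul_zero]
    · simp
  have hJsupp : ∀ p q, RRCJ.SuppIn H ((QuotientGroup.mk (T t) : G ⧸ H))⁻¹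
      ((Pinv * K * Pm) p q) := by
    intro p q g hg
    rw [hJeq, Matrix.of_apply] at hg
    split_ifs at hg with h
    · have hgx : g = (T p.1)⁻¹ * T q.1 := by
        by_contra hne
        exact hg (Finsupp.single_eq_of_ne' (fun hh => hne hh.symm))
      subst hgx
      have hp1 : (QuotientGroup.mk (T p.1) : G ⧸ H)
          = QuotientGroup.mk (T t) * QuotientGroup.mk (T q.1) := by
        rw [h.1, QuotientGroup.mk_mul]
      rw [QuotientGroup.mk_mul, QuotientGroup.mk_inv, hp1, mul_inv_rev, mul_assoc,
        hab ((QuotientGroup.mk (T t) : G ⧸ H))⁻¹ (QuotientGroup.mk (T q.1)),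
        ← mul_assoc, inv_mul_cancel, one_mul]
    · simp at hg
  have hXsupp : ∀ p q, RRCJ.SuppIn H (1 : G ⧸ H) (X p q) := by
    intro p q g hg
    rw [hXdef, Matrix.map_apply] at hg
    have heq : ((MonoidAlgebra.mapDomainRingHom R H.subtype) ((L A) p q)).coeff
        = Finsupp.mapDomain H.subtype ((L A) p q).coeff := rfl
    rw [heq] at hg
    have hmem := Finsupp.mapDomain_support (Finsupp.mem_support_iff.mpr hg)
    obtain ⟨h', -, rfl⟩ := Finset.mem_image.mp hmem
    exact (QuotientGroup.eq_one_iff _).mpr (by simpa using h'.2)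
  have hXJ : ∀ p q, RRCJ.SuppIn H ((QuotientGroup.mk (T t) : G ⧸ H))⁻¹
      ((X * (Pinv * K * Pm)) p q) := by
    have h := RRCJ.suppIn_matMul hXsupp hJsupp
    rwa [one_mul] at h
  have hJX : ∀ p q, RRCJ.SuppIn H ((QuotientGroup.mk (T t) : G ⧸ H))⁻¹
      (((Pinv * K * Pm) * X) p q) := by
    have h := RRCJ.suppIn_matMul hJsupp hXsupp
    rwa [mul_one] at h
  have hE0 : E * (X * (Pinv * K * Pm) - (Pinv * K * Pm) * X) = 0 := by
    rw [Matrix.mul_sub, ← Matrix.mul_assoc, ← hL A, Matrix.mul_assoc, hEJ,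
      ← Matrix.mul_assoc, hEJ, ← hL A, sub_self]
  have hW0 := RRCJ.cancel T hTinj _ (X * (Pinv * K * Pm) - (Pinv * K * Pm) * X)
    (fun p q => by
      rw [Matrix.sub_apply]
      exact RRCJ.suppIn_sub (hXJ p q) (hJX p q)) hE0
  exact sub_eq_zero.mp hW0
end

section
/- Let G/H be a finite abelian quotient (H normal of finite index in G) and \(L_T\) the left regular representation \(\mathrm{Mat}(m, RG) \to \mathrm{Mat}(m[G:H], RH)\). Then the image of \(L_T\) equals exactly the set of matrices \(B \in \mathrm{Mat}(m[G:H], RH)\) that commute with \(J_t = P^{-1}(L_{G/H}(tH) \otimes I_m)P\) for all \(t \in T\). -/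
/-- If `H` is normal in `G` with `G/H` abelian, then the image of the left regular
representation `L_T : Mat(m, RG) → Mat(m[G:H], RH)` is exactly the set of matrices over
`RH` commuting with every `Jₜ = P⁻¹ (L_{G/H}(tH) ⊗ Iₘ) P`.
(Commutation is stated inside `RG` via the canonical embedding `RH → RG`.) -/
theorem regular_rep_range_eq_commutant {R : Type*} [CommRing R] {G : Type*} [Group G]
    (H : Subgroup G) [H.Normal] [DecidableEq (G ⧸ H)]
    (hab : ∀ a b : G ⧸ H, a * b = b * a) {m r : ℕ}
    (T : Fin r → G) (hT : ∀ g : G, ∃! i : Fin r, (T i)⁻¹ * g ∈ H)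
    (L : Matrix (Fin m) (Fin m) (MonoidAlgebra R G) →
      Matrix (Fin r × Fin m) (Fin r × Fin m) (MonoidAlgebra R ↥H))
    (hL : ∀ A, A * Matrix.of (fun (i : Fin m) (p : Fin r × Fin m) =>
        if i = p.2 then MonoidAlgebra.of R G (T p.1) else 0)
      = Matrix.of (fun (i : Fin m) (p : Fin r × Fin m) =>
        if i = p.2 then MonoidAlgebra.of R G (T p.1) else 0)
        * (L A).map (MonoidAlgebra.mapDomainRingHom R H.subtype)) :
    Set.range L =
      { B : Matrix (Fin r × Fin m) (Fin r × Fin m) (MonoidAlgebra R ↥H) |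
        ∀ t : Fin r,
          B.map (MonoidAlgebra.mapDomainRingHom R H.subtype) *
            ((Matrix.of fun p q : Fin r × Fin m =>
                if p = q then MonoidAlgebra.of R G ((T p.1)⁻¹) else 0) *
              Matrix.kroneckerMap (· * ·)
                (Matrix.of fun i j : Fin r =>
                  if (QuotientGroup.mk (T i) : G ⧸ H) = QuotientGroup.mk (T t * T j)
                  then (1 : MonoidAlgebra R G) else 0)
                (1 : Matrix (Fin m) (Fin m) (MonoidAlgebra R G)) *
              (Matrix.of fun p q : Fin r × Fin m =>
                if p = q then MonoidAlgebra.of R G (T p.1) else 0)) =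
          ((Matrix.of fun p q : Fin r × Fin m =>
                if p = q then MonoidAlgebra.of R G ((T p.1)⁻¹) else 0) *
              Matrix.kroneckerMap (· * ·)
                (Matrix.of fun i j : Fin r =>
                  if (QuotientGroup.mk (T i) : G ⧸ H) = QuotientGroup.mk (T t * T j)
                  then (1 : MonoidAlgebra R G) else 0)
                (1 : Matrix (Fin m) (Fin m) (MonoidAlgebra R G)) *
              (Matrix.of fun p q : Fin r × Fin m =>
                if p = q then MonoidAlgebra.of R G (T p.1) else 0)) *
            B.map (MonoidAlgebra.mapDomainRingHom R H.subtype) } := by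
  classical
  choose σ hσmem hσuniq using hT
  simp only [MonoidAlgebra.of_apply] at hL ⊢
  set ι := MonoidAlgebra.mapDomainRingHom R H.subtype with hι
  set Pm : Matrix (Fin m) (Fin r × Fin m) (MonoidAlgebra R G) :=
    Matrix.of (fun (i : Fin m) (p : Fin r × Fin m) =>
      if i = p.2 then MonoidAlgebra.single (T p.1) (1 : R) else 0) with hPm
  set Qd : Matrix (Fin r × Fin m) (Fin r × Fin m) (MonoidAlgebra R G) :=
    Matrix.of (fun p q : Fin r × Fin m =>
      if p = q then MonoidAlgebra.single (T p.1) (1 : R) else 0) with hQd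
  set Qi : Matrix (Fin r × Fin m) (Fin r × Fin m) (MonoidAlgebra R G) :=
    Matrix.of (fun p q : Fin r × Fin m =>
      if p = q then MonoidAlgebra.single ((T p.1)⁻¹) (1 : R) else 0) with hQi
  -- basic facts about ι
  have ιsingle : ∀ (h : ↥H) (c : R),
      ι (MonoidAlgebra.single h c) = MonoidAlgebra.single (h : G) c := by
    intro h c
    simp [hι, MonoidAlgebra.mapDomainRingHom_apply, Finsupp.mapDomain_single]
  have ιinj : Function.Injective ι := by
    intro x y hxy
    exact MonoidAlgebra.mapDomain_injective (Subgroup.subtype_injective H) (by simpa [hι] using hxy)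
  have unit_cancel : ∀ (g : G) (x y : MonoidAlgebra R G),
      MonoidAlgebra.single g (1 : R) * x = MonoidAlgebra.single g 1 * y → x = y := by
    intro g x y h
    have := congrArg (fun z => MonoidAlgebra.single g⁻¹ (1 : R) * z) h
    simpa [← mul_assoc, MonoidAlgebra.single_mul_single, ← MonoidAlgebra.one_def] using this
  -- facts about σ
  have hmkT : ∀ g : G, (QuotientGroup.mk (T (σ g)) : G ⧸ H) = QuotientGroup.mk g := by
    intro g; exact (QuotientGroup.eq).mpr (hσmem g)
  have hσ_iff : ∀ (g : G) (i : Fin r),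
      σ g = i ↔ (QuotientGroup.mk (T i) : G ⧸ H) = QuotientGroup.mk g := by
    intro g i
    constructor
    · rintro rfl; exact hmkT g
    · intro h; exact (hσuniq g i (QuotientGroup.eq.mp h)).symm
  have hσσ : ∀ x y : G, σ x = σ y ↔ (QuotientGroup.mk x : G ⧸ H) = QuotientGroup.mk y := by
    intro x y
    rw [hσ_iff, hmkT y]
    exact eq_comm
  have hρ : ∀ (t u v : Fin r), σ (T t * T v) = u ↔ v = σ ((T t)⁻¹ * T u) := by
    intro t u v
    rw [hσ_iff, eq_comm (a := v), hσ_iff]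
    simp only [QuotientGroup.mk_mul, QuotientGroup.mk_inv]
    constructor
    · intro h; rw [h, inv_mul_cancel_left]
    · intro h; rw [h, mul_inv_cancel_left]
  -- the coset-component projections
  let E : Fin r → MonoidAlgebra R G →+ MonoidAlgebra R G := fun u =>
    { toFun := fun a => MonoidAlgebra.ofCoeff (Finsupp.filter (fun g => σ g = u) a.coeff)
      map_zero' := congrArg MonoidAlgebra.ofCoeff (Finsupp.filter_zero _)
      map_add' := fun a b => congrArg MonoidAlgebra.ofCoeff Finsupp.filter_add }
  have Eapp : ∀ u a, E u a = MonoidAlgebra.ofCoeff (Finsupp.filter (fun g => σ g = u) a.coeff) :=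
    fun _ _ => rfl
  have Esingle : ∀ (u : Fin r) (g : G) (c : R),
      E u (MonoidAlgebra.single g c) = if σ g = u then MonoidAlgebra.single g c else 0 := by
    intro u g c
    rw [Eapp]
    by_cases h : σ g = u
    · rw [if_pos h]; exact congrArg MonoidAlgebra.ofCoeff (Finsupp.filter_single_of_pos _ h)
    · rw [if_neg h]; exact congrArg MonoidAlgebra.ofCoeff (Finsupp.filter_single_of_neg _ h)
  have Emul : ∀ (u v : Fin r) (b : MonoidAlgebra R ↥H),
      E u (MonoidAlgebra.single (T v) (1 : R) * ι b)
        = if v = u then MonoidAlgebra.single (T v) (1 : R) * ι b else 0 := by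
    intro u v b
    induction b using MonoidAlgebra.induction_linear with
    | zero => simp
    | add f g hf hg =>
        have hfg : ι (f + g) = ι f + ι g := map_add ι f g
        rw [hfg, mul_add, map_add, hf, hg]
        by_cases hvu : v = u <;> simp [hvu, mul_add]
    | single h c =>
        have hσv : σ (T v * (h : G)) = v :=
          (hσuniq _ v (by simpa using SetLike.coe_mem h)).symm
        by_cases hvu : v = u
        · subst hvu
          simp [ιsingle, MonoidAlgebra.single_mul_single, Esingle, hσv]
        · simp [ιsingle, MonoidAlgebra.single_mul_single, Esingle, hσv, hvu]
  have sum_inj : ∀ (b b' : Fin r → MonoidAlgebra R ↥H),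
      (∑ u, MonoidAlgebra.single (T u) (1 : R) * ι (b u))
        = (∑ u, MonoidAlgebra.single (T u) (1 : R) * ι (b' u)) → ∀ u, b u = b' u := by
    intro b b' hsum u
    have h1 := congrArg (E u) hsum
    simp only [map_sum] at h1
    simp only [Emul] at h1
    rw [Finset.sum_ite_eq' Finset.univ u
        (fun v => MonoidAlgebra.single (T v) (1 : R) * ι (b v)),
      Finset.sum_ite_eq' Finset.univ u
        (fun v => MonoidAlgebra.single (T v) (1 : R) * ι (b' v))] at h1
    simp only [Finset.mem_univ, if_true] at h1
    exact ιinj (unit_cancel (T u) _ _ h1)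
  -- entries of A * P and P * (ι C)
  have AP : ∀ (A : Matrix (Fin m) (Fin m) (MonoidAlgebra R G)) (i j : Fin m) (s : Fin r),
      (A * Pm) i (s, j) = A i j * MonoidAlgebra.single (T s) (1 : R) := by
    intro A i j s
    rw [Matrix.mul_apply]
    simp only [hPm, Matrix.of_apply, mul_ite, mul_zero]
    rw [Finset.sum_ite_eq' Finset.univ j
        (fun k => A i k * MonoidAlgebra.single (T s) (1 : R))]
    simp
  have PB : ∀ (C : Matrix (Fin r × Fin m) (Fin r × Fin m) (MonoidAlgebra R ↥H))
      (i j : Fin m) (s : Fin r),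
      (Pm * C.map ι) i (s, j)
        = ∑ u, MonoidAlgebra.single (T u) (1 : R) * ι (C (u, i) (s, j)) := by
    intro C i j s
    rw [Matrix.mul_apply, Fintype.sum_prod_type]
    simp only [hPm, Matrix.of_apply, Matrix.map_apply, ite_mul, zero_mul]
    refine Finset.sum_congr rfl fun v _ => ?_
    rw [Finset.sum_ite_eq Finset.univ i
        (fun k => MonoidAlgebra.single (T v) (1 : R) * ι (C (v, k) (s, j)))]
    simp
  have uniq : ∀ C C' : Matrix (Fin r × Fin m) (Fin r × Fin m) (MonoidAlgebra R ↥H),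
      Pm * C.map ι = Pm * C'.map ι → C = C' := by
    intro C C' h
    refine Matrix.ext fun p q => ?_
    obtain ⟨u, i⟩ := p; obtain ⟨s, j⟩ := q
    have h2 : (Pm * C.map ι) i (s, j) = (Pm * C'.map ι) i (s, j) := by rw [h]
    rw [PB, PB] at h2
    exact sum_inj _ _ h2 u
  have hL' : ∀ A (i j : Fin m) (s : Fin r),
      A i j * MonoidAlgebra.single (T s) (1 : R)
        = ∑ u, MonoidAlgebra.single (T u) (1 : R) * ι ((L A) (u, i) (s, j)) := by
    intro A i j s
    have h2 : (A * Pm) i (s, j) = (Pm * (L A).map ι) i (s, j) := by rw [hL A]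
    rw [AP, PB] at h2
    exact h2
  have ELA : ∀ A (u : Fin r) (i j : Fin m) (s : Fin r),
      MonoidAlgebra.single (T u) (1 : R) * ι ((L A) (u, i) (s, j))
        = E u (A i j * MonoidAlgebra.single (T s) (1 : R)) := by
    intro A u i j s
    rw [hL', map_sum]
    simp only [Emul]
    rw [Finset.sum_ite_eq' Finset.univ u
        (fun v => MonoidAlgebra.single (T v) (1 : R) * ι ((L A) (v, i) (s, j)))]
    simp
  -- the key computational lemma (uses commutativity of G/H)
  have core : ∀ (t u s : Fin r) (a : MonoidAlgebra R G),
      E u (a * MonoidAlgebra.single (T (σ (T t * T s))) (1 : R)) *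
          MonoidAlgebra.single ((T (σ (T t * T s)))⁻¹ * T s) (1 : R)
        = E (σ ((T t)⁻¹ * T u)) (a * MonoidAlgebra.single (T s) (1 : R)) := by
    intro t u s a
    induction a using MonoidAlgebra.induction_linear with
    | zero => simp
    | add f g hf hg => simp only [add_mul, map_add]; rw [hf, hg]
    | single g c =>
        rw [MonoidAlgebra.single_mul_single, MonoidAlgebra.single_mul_single, mul_one,
          Esingle, Esingle]
        have hcomm : ∀ x y z : G ⧸ H, x * (y * z) = y * (x * z) := fun x y z => by
          rw [← mul_assoc, hab x y, mul_assoc]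
        have hcond : σ (g * T (σ (T t * T s))) = u ↔ σ (g * T s) = σ ((T t)⁻¹ * T u) := by
          rw [hσ_iff, hσσ]
          simp only [QuotientGroup.mk_mul, QuotientGroup.mk_inv]
          rw [hmkT (T t * T s)]
          simp only [QuotientGroup.mk_mul]
          constructor
          · intro h
            rw [h, hcomm, inv_mul_cancel_left]
          · intro h
            rw [hcomm, h, mul_inv_cancel_left]
        by_cases hc : σ (g * T (σ (T t * T s))) = u
        · rw [if_pos hc, if_pos (hcond.mp hc), MonoidAlgebra.single_mul_single, mul_one,
            mul_assoc, mul_inv_cancel_left]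
        · rw [if_neg hc, if_neg (fun h => hc (hcond.mpr h)), zero_mul]
  -- entries of the conjugated Kronecker matrix
  have Ment : ∀ (t : Fin r) (u s : Fin r) (k j : Fin m),
      (Qi * Matrix.kroneckerMap (· * ·)
          (Matrix.of fun i j : Fin r =>
            if (QuotientGroup.mk (T i) : G ⧸ H) = QuotientGroup.mk (T t * T j)
            then (1 : MonoidAlgebra R G) else 0)
          (1 : Matrix (Fin m) (Fin m) (MonoidAlgebra R G)) * Qd) (u, k) (s, j)
        = if k = j ∧ σ (T t * T s) = u
          then MonoidAlgebra.single ((T u)⁻¹ * T s) (1 : R) else 0 := by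
    intro t u s k j
    have hQdr : ∀ (N : Matrix (Fin r × Fin m) (Fin r × Fin m) (MonoidAlgebra R G)) p q,
        (N * Qd) p q = N p q * MonoidAlgebra.single (T q.1) (1 : R) := by
      intro N p q
      rw [Matrix.mul_apply]
      simp only [hQd, Matrix.of_apply, mul_ite, mul_zero]
      rw [Finset.sum_ite_eq' Finset.univ q
          (fun x => N p x * MonoidAlgebra.single (T x.1) (1 : R))]
      simp
    have hQil : ∀ (N : Matrix (Fin r × Fin m) (Fin r × Fin m) (MonoidAlgebra R G)) p q,
        (Qi * N) p q = MonoidAlgebra.single ((T p.1)⁻¹) (1 : R) * N p q := by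
      intro N p q
      rw [Matrix.mul_apply]
      simp only [hQi, Matrix.of_apply, ite_mul, zero_mul]
      rw [Finset.sum_ite_eq Finset.univ p
          (fun x => MonoidAlgebra.single ((T p.1)⁻¹) (1 : R) * N x q)]
      simp
    rw [hQdr, hQil, Matrix.kroneckerMap_apply, Matrix.one_apply]
    have hcnd : ((QuotientGroup.mk (T u) : G ⧸ H)
          = QuotientGroup.mk (T t) * QuotientGroup.mk (T s)) ↔ σ (T t * T s) = u := by
      rw [← QuotientGroup.mk_mul]; exact (hσ_iff _ _).symm
    by_cases h1 : σ (T t * T s) = u <;> by_cases h2 : k = j <;>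
      simp [h1, h2, hcnd, MonoidAlgebra.single_mul_single, Matrix.of_apply]
  -- entries of the two products with B
  have entryL : ∀ (t : Fin r) (M : Matrix (Fin r × Fin m) (Fin r × Fin m) (MonoidAlgebra R G)),
      (∀ (u s : Fin r) (k j : Fin m), M (u, k) (s, j)
          = if k = j ∧ σ (T t * T s) = u
            then MonoidAlgebra.single ((T u)⁻¹ * T s) (1 : R) else 0) →
      ∀ (B : Matrix (Fin r × Fin m) (Fin r × Fin m) (MonoidAlgebra R ↥H))
        (u s : Fin r) (k j : Fin m),
        (B.map ι * M) (u, k) (s, j)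
          = ι (B (u, k) (σ (T t * T s), j)) *
              MonoidAlgebra.single ((T (σ (T t * T s)))⁻¹ * T s) (1 : R) := by
    intro t M hM B u s k j
    rw [Matrix.mul_apply, Fintype.sum_prod_type]
    simp only [Matrix.map_apply, hM, mul_ite, mul_zero, ite_and]
    rw [Finset.sum_congr rfl (fun v (_ : v ∈ Finset.univ) => Finset.sum_ite_eq' Finset.univ j
        (fun l => if σ (T t * T s) = v
          then ι (B (u, k) (v, l)) * MonoidAlgebra.single ((T v)⁻¹ * T s) (1 : R) else 0))]
    simp only [Finset.mem_univ, if_true]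
    rw [Finset.sum_ite_eq Finset.univ (σ (T t * T s))
        (fun v => ι (B (u, k) (v, j)) * MonoidAlgebra.single ((T v)⁻¹ * T s) (1 : R))]
    simp
  have entryR : ∀ (t : Fin r) (M : Matrix (Fin r × Fin m) (Fin r × Fin m) (MonoidAlgebra R G)),
      (∀ (u s : Fin r) (k j : Fin m), M (u, k) (s, j)
          = if k = j ∧ σ (T t * T s) = u
            then MonoidAlgebra.single ((T u)⁻¹ * T s) (1 : R) else 0) →
      ∀ (B : Matrix (Fin r × Fin m) (Fin r × Fin m) (MonoidAlgebra R ↥H))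
        (u s : Fin r) (k j : Fin m),
        (M * B.map ι) (u, k) (s, j)
          = MonoidAlgebra.single ((T u)⁻¹ * T (σ ((T t)⁻¹ * T u))) (1 : R) *
              ι (B (σ ((T t)⁻¹ * T u), k) (s, j)) := by
    intro t M hM B u s k j
    rw [Matrix.mul_apply, Fintype.sum_prod_type]
    simp only [Matrix.map_apply, hM, ite_mul, zero_mul, ite_and]
    rw [Finset.sum_congr rfl (fun v (_ : v ∈ Finset.univ) => Finset.sum_ite_eq Finset.univ k
        (fun l => if σ (T t * T v) = u
          then MonoidAlgebra.single ((T u)⁻¹ * T v) (1 : R) * ι (B (v, l) (s, j)) else 0))]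
    simp only [Finset.mem_univ, if_true]
    simp only [hρ]
    rw [Finset.sum_ite_eq' Finset.univ (σ ((T t)⁻¹ * T u))
        (fun v => MonoidAlgebra.single ((T u)⁻¹ * T v) (1 : R) * ι (B (v, k) (s, j)))]
    simp
  -- main proof
  ext B
  simp only [Set.mem_range, Set.mem_setOf_eq]
  constructor
  · rintro ⟨A, rfl⟩
    intro t
    refine Matrix.ext fun p q => ?_
    obtain ⟨u, k⟩ := p; obtain ⟨s, j⟩ := q
    rw [entryL t _ (Ment t) (L A) u s k j, entryR t _ (Ment t) (L A) u s k j]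
    apply unit_cancel (T u)
    rw [← mul_assoc, ELA A u k j (σ (T t * T s)), core t u s (A k j), ← mul_assoc,
      MonoidAlgebra.single_mul_single, one_mul, mul_inv_cancel_left,
      ELA A (σ ((T t)⁻¹ * T u)) k j s]
  · intro hB
    have star : ∀ (t u s : Fin r) (k j : Fin m),
        ι (B (u, k) (σ (T t * T s), j)) *
            MonoidAlgebra.single ((T (σ (T t * T s)))⁻¹ * T s) (1 : R)
          = MonoidAlgebra.single ((T u)⁻¹ * T (σ ((T t)⁻¹ * T u))) (1 : R) *
              ι (B (σ ((T t)⁻¹ * T u), k) (s, j)) := by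
      intro t u s k j
      have h2 := congrFun (congrFun (hB t) (u, k)) (s, j)
      rw [entryL t _ (Ment t) B u s k j, entryR t _ (Ment t) B u s k j] at h2
      exact h2
    refine ⟨Matrix.of (fun k j : Fin m => ∑ v, MonoidAlgebra.single (T v) (1 : R) *
      ι (B (v, k) (σ (1 : G), j)) * MonoidAlgebra.single ((T (σ (1 : G)))⁻¹) (1 : R)), ?_⟩
    apply uniq
    rw [← hL]
    refine Matrix.ext fun i q => ?_
    obtain ⟨s, j⟩ := q
    rw [AP, PB]
    set s₀ := σ (1 : G) with hs₀
    set t := σ (T s * (T s₀)⁻¹) with ht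
    have hτ : σ (T t * T s₀) = s := by
      rw [hσ_iff, QuotientGroup.mk_mul, ht, hmkT, QuotientGroup.mk_mul, QuotientGroup.mk_inv,
        inv_mul_cancel_right]
    have star' : ∀ u : Fin r,
        ι (B (u, i) (s, j)) * MonoidAlgebra.single ((T s)⁻¹ * T s₀) (1 : R)
          = MonoidAlgebra.single ((T u)⁻¹ * T (σ ((T t)⁻¹ * T u))) (1 : R) *
              ι (B (σ ((T t)⁻¹ * T u), i) (s₀, j)) := by
      intro u
      have h3 := star t u s₀ i j
      rw [hτ] at h3
      exact h3
    have hBu : ∀ u : Fin r,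
        ι (B (u, i) (s, j))
          = MonoidAlgebra.single ((T u)⁻¹ * T (σ ((T t)⁻¹ * T u))) (1 : R) *
              ι (B (σ ((T t)⁻¹ * T u), i) (s₀, j)) *
              MonoidAlgebra.single ((T s₀)⁻¹ * T s) (1 : R) := by
      intro u
      rw [← star' u, mul_assoc, MonoidAlgebra.single_mul_single, one_mul,
        show ((T s)⁻¹ * T s₀) * ((T s₀)⁻¹ * T s) = 1 by group, ← MonoidAlgebra.one_def, mul_one]
    have hbij : Function.Bijective (fun u : Fin r => σ ((T t)⁻¹ * T u)) := by
      constructor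
      · intro a b h4
        simp only at h4
        have ha := (hρ t a (σ ((T t)⁻¹ * T a))).mpr rfl
        have hb := (hρ t b (σ ((T t)⁻¹ * T b))).mpr rfl
        rw [← ha, ← hb, h4]
      · intro v
        exact ⟨σ (T t * T v), ((hρ t (σ (T t * T v)) v).mp rfl).symm⟩
    rw [Matrix.of_apply, Finset.sum_mul]
    symm
    calc (∑ u, MonoidAlgebra.single (T u) (1 : R) * ι (B (u, i) (s, j)))
        = ∑ u, MonoidAlgebra.single (T (σ ((T t)⁻¹ * T u))) (1 : R) *
            ι (B (σ ((T t)⁻¹ * T u), i) (s₀, j)) *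
            MonoidAlgebra.single ((T s₀)⁻¹ * T s) (1 : R) := by
          refine Finset.sum_congr rfl fun u _ => ?_
          rw [hBu u, ← mul_assoc, ← mul_assoc, MonoidAlgebra.single_mul_single, one_mul,
            mul_inv_cancel_left]
      _ = ∑ v, MonoidAlgebra.single (T v) (1 : R) * ι (B (v, i) (s₀, j)) *
            MonoidAlgebra.single ((T s₀)⁻¹ * T s) (1 : R) := by
          exact Fintype.sum_bijective _ hbij _ _ (fun u => rfl)
      _ = ∑ v, MonoidAlgebra.single (T v) (1 : R) * ι (B (v, i) (s₀, j)) *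
            MonoidAlgebra.single ((T s₀)⁻¹) (1 : R) * MonoidAlgebra.single (T s) (1 : R) := by
          refine Finset.sum_congr rfl fun v _ => ?_
          rw [mul_assoc (MonoidAlgebra.single (T v) (1 : R) * ι (B (v, i) (s₀, j))),
            MonoidAlgebra.single_mul_single, one_mul]
end

section
/- Let R be a commutative ring, G a group, H an abelian subgroup of finite index in G. For all \(A, B \in \mathrm{Mat}(m, RG)\), \(AB = I_m\) if and only if \(BA = I_m\). -/
open Function

private theorem aux_one_sided {R : Type*} [CommRing R] {G : Type*}
    [Group G] {H : Type*} [CommGroup H] (f : H →* G)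
    [f.range.FiniteIndex] {m : ℕ}
    (A B : Matrix (Fin m) (Fin m) (MonoidAlgebra R G)) (hAB : A * B = 1) : B * A = 1 := by
  classical
  let φ : MonoidAlgebra R H →+* MonoidAlgebra R G := MonoidAlgebra.mapDomainRingHom R f
  have hcomm : ∀ x y, Commute (φ x) (φ y) := by
    intro x y
    show φ x * φ y = φ y * φ x
    rw [← map_mul, ← map_mul, mul_comm]
  letI : Module (MonoidAlgebra R H) (MonoidAlgebra R G) :=
    Module.compHom (MonoidAlgebra R G) (φ.toOpposite hcomm)
  have smul_def : ∀ (k : MonoidAlgebra R H) (x : MonoidAlgebra R G), k • x = x * φ k :=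
    fun k x => rfl
  have hφ : ∀ (h : H) (r : R), φ (MonoidAlgebra.single h r) = MonoidAlgebra.single (f h) r := by
    intro h r
    show MonoidAlgebra.mapDomain f (MonoidAlgebra.single h r) = MonoidAlgebra.single (f h) r
    rw [MonoidAlgebra.mapDomain_single]
  haveI : Module.Finite (MonoidAlgebra R H) (MonoidAlgebra R G) := by
    rw [Module.finite_def, Submodule.fg_def]
    refine ⟨Set.range (fun q : G ⧸ f.range => MonoidAlgebra.of R G q.out),
      Set.finite_range _, ?_⟩
    rw [Submodule.eq_top_iff']
    intro x
    induction x using MonoidAlgebra.induction with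
    | zero => exact Submodule.zero_mem _
    | single_add g r x _ _ ih =>
      refine Submodule.add_mem _ ?_ ih
      let q : G ⧸ f.range := QuotientGroup.mk g
      have hout : (QuotientGroup.mk q.out : G ⧸ f.range) = QuotientGroup.mk g :=
        Quotient.out_eq q
      obtain ⟨h, hh⟩ : q.out⁻¹ * g ∈ f.range := (QuotientGroup.eq).mp hout
      have key : (MonoidAlgebra.single h r : MonoidAlgebra R H) • (MonoidAlgebra.of R G q.out) =
          MonoidAlgebra.single g r := by
        rw [smul_def, hφ, MonoidAlgebra.of_apply, MonoidAlgebra.single_mul_single, one_mul,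
          hh, mul_inv_cancel_left]
      show (MonoidAlgebra.single g r : MonoidAlgebra R G) ∈ _
      rw [← key]
      exact Submodule.smul_mem _ _ (Submodule.subset_span (Set.mem_range_self q))
  let L : Matrix (Fin m) (Fin m) (MonoidAlgebra R G) →
      (Fin m → MonoidAlgebra R G) →ₗ[MonoidAlgebra R H] (Fin m → MonoidAlgebra R G) := fun M =>
    { toFun := M.mulVec
      map_add' := fun v w => Matrix.mulVec_add M v w
      map_smul' := fun k v => by
        funext i
        show ∑ j, M i j * (v j * φ k) = (∑ j, M i j * v j) * φ k
        rw [Finset.sum_mul]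
        exact Finset.sum_congr rfl fun j _ => (mul_assoc _ _ _).symm }
  have hsurj : Surjective (L A) := fun v =>
    ⟨B.mulVec v, by
      show A.mulVec (B.mulVec v) = v
      rw [Matrix.mulVec_mulVec, hAB, Matrix.one_mulVec]⟩
  have hinj : Injective (L A) :=
    OrzechProperty.injective_of_surjective_endomorphism (L A) hsurj
  have key : ∀ v : Fin m → MonoidAlgebra R G, (B * A).mulVec v = v := by
    intro v
    apply hinj
    show A.mulVec ((B * A).mulVec v) = A.mulVec v
    rw [Matrix.mulVec_mulVec, ← Matrix.mul_assoc, hAB, Matrix.one_mul]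
  ext i j : 2
  have h2 := congrFun (key (Pi.single j 1)) i
  rw [Matrix.mulVec_single] at h2
  simp only [Pi.smul_apply, Matrix.col_apply, op_smul_eq_mul, mul_one] at h2
  rw [h2, Matrix.one_apply, Pi.single_apply]


/-- If `G` has an abelian subgroup of finite index (given here as the range of an
injective homomorphism `f` from a commutative group `H`), then in `Mat(m, RG)` one-sided
inverses are two-sided: `AB = 1 ↔ BA = 1`. -/
theorem matrix_monoidAlgebra_mul_eq_one_comm {R : Type*} [CommRing R] {G : Type*}
    [Group G] {H : Type*} [CommGroup H] (f : H →* G) (hf : Function.Injective f)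
    [f.range.FiniteIndex] {m : ℕ}
    (A B : Matrix (Fin m) (Fin m) (MonoidAlgebra R G)) :
    A * B = 1 ↔ B * A = 1 :=
  ⟨aux_one_sided f A B, aux_one_sided f B A⟩
end

section
/- Let H be an abelian subgroup of finite index in G, and \(\mathrm{Det} = \det \circ L : \mathrm{Mat}(m, RG) \to RH\) the noncommutative determinant. Then (1) \(\mathrm{Det}(AB) = \mathrm{Det}(A)\mathrm{Det}(B)\) for all A, B, and (2) A is invertible in \(\mathrm{Mat}(m, RG)\) if and only if \(\mathrm{Det}(A)\) is invertible in RH. -/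
/-- Properties of the noncommutative determinant `Det = det ∘ L_T : Mat(m, RG) → RH`
for an abelian subgroup (the range of an injective hom `f : H →* G`) of finite index:
(1) `Det(AB) = Det(A) Det(B)`; (2) `A` is invertible iff `Det(A)` is invertible in `RH`. -/
theorem Det_mul_and_isUnit {R : Type*} [CommRing R] {G : Type*} [Group G]
    {H : Type*} [CommGroup H] (f : H →* G) (hf : Function.Injective f) {m r : ℕ}
    (T : Fin r → G) (hT : ∀ g : G, ∃! i : Fin r, ∃ h : H, g = T i * f h)
    (L : Matrix (Fin m) (Fin m) (MonoidAlgebra R G) →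
      Matrix (Fin r × Fin m) (Fin r × Fin m) (MonoidAlgebra R H))
    (hL : ∀ A, A * Matrix.of (fun (i : Fin m) (p : Fin r × Fin m) =>
        if i = p.2 then MonoidAlgebra.of R G (T p.1) else 0)
      = Matrix.of (fun (i : Fin m) (p : Fin r × Fin m) =>
        if i = p.2 then MonoidAlgebra.of R G (T p.1) else 0)
        * (L A).map (MonoidAlgebra.mapDomainRingHom R f)) :
    (∀ A B : Matrix (Fin m) (Fin m) (MonoidAlgebra R G),
      (L (A * B)).det = (L A).det * (L B).det) ∧
    (∀ A : Matrix (Fin m) (Fin m) (MonoidAlgebra R G),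
      IsUnit A ↔ IsUnit (L A).det) := by
  set φ := MonoidAlgebra.mapDomainRingHom R f with hφ
  set P : Matrix (Fin m) (Fin r × Fin m) (MonoidAlgebra R G) :=
    Matrix.of (fun i p => if i = p.2 then MonoidAlgebra.of R G (T p.1) else 0) with hPdef
  have hφapp : ∀ x : MonoidAlgebra R H, φ x = MonoidAlgebra.ofCoeff (Finsupp.mapDomain f x.coeff) := fun x => rfl
  have hof : ∀ g, MonoidAlgebra.of R G g = MonoidAlgebra.single g (1 : R) := fun g => rfl
  -- freeness of RG over RH via coset reps
  have free : ∀ y : Fin r → MonoidAlgebra R H,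
      (∑ j, MonoidAlgebra.of R G (T j) * φ (y j)) = 0 → ∀ j, y j = 0 := by
    intro y hy j
    refine MonoidAlgebra.coeff_injective (Finsupp.ext fun h₀ => ?_)
    have h1 : (∑ j', MonoidAlgebra.of R G (T j') * φ (y j')).coeff (T j * f h₀)
        = (0 : MonoidAlgebra R G).coeff (T j * f h₀) := by rw [hy]
    rw [MonoidAlgebra.coeff_sum, Finsupp.finset_sum_apply] at h1
    have h2 : ∀ j' : Fin r, j' ≠ j →
        (MonoidAlgebra.of R G (T j') * φ (y j')).coeff (T j * f h₀) = 0 := by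
      intro j' hj'
      rw [hof, MonoidAlgebra.coeff_single_mul_apply, one_mul, hφapp, MonoidAlgebra.coeff_ofCoeff]
      apply Finsupp.mapDomain_notin_range
      rintro ⟨h', hh'⟩
      obtain ⟨i, -, hiu⟩ := hT (T j * f h₀)
      have e1 : j = i := hiu j ⟨h₀, rfl⟩
      have e2 : j' = i := hiu j' ⟨h', by rw [hh', mul_inv_cancel_left]⟩
      exact hj' (e2.trans e1.symm)
    rw [Finset.sum_eq_single j (fun j' _ hj' => h2 j' hj') (by simp)] at h1
    rw [hof, MonoidAlgebra.coeff_single_mul_apply, one_mul,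
      inv_mul_cancel_left, hφapp, MonoidAlgebra.coeff_ofCoeff, Finsupp.mapDomain_apply hf] at h1
    simpa using h1
  -- the map Y ↦ P * Y.map φ is injective
  have hinj : ∀ Y Y' : Matrix (Fin r × Fin m) (Fin r × Fin m) (MonoidAlgebra R H),
      P * Y.map φ = P * Y'.map φ → Y = Y' := by
    have key : ∀ Y : Matrix (Fin r × Fin m) (Fin r × Fin m) (MonoidAlgebra R H),
        P * Y.map φ = 0 → Y = 0 := by
      intro Y hY
      refine Matrix.ext fun p q => ?_
      obtain ⟨j', i⟩ := p
      have h1 := congrFun (congrFun hY i) q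
      simp only [Matrix.mul_apply, Matrix.zero_apply] at h1
      rw [Fintype.sum_prod_type] at h1
      have h2 : ∀ j'' : Fin r, ∑ k : Fin m, P i (j'', k) * (Y.map φ) (j'', k) q
          = MonoidAlgebra.of R G (T j'') * φ (Y (j'', i) q) := by
        intro j''
        rw [Finset.sum_eq_single i]
        · simp [hPdef]
        · intro k _ hk
          simp [hPdef, Ne.symm hk]
        · simp
      rw [Finset.sum_congr rfl (fun j'' _ => h2 j'')] at h1
      simpa using free (fun j'' => Y (j'', i) q) h1 j'
    intro Y Y' h
    have h0 : P * (Y - Y').map φ = 0 := by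
      rw [Matrix.map_sub _ (fun a b => map_sub φ a b), Matrix.mul_sub, h, sub_self]
    exact sub_eq_zero.mp (key _ h0)
  -- L is multiplicative
  have hone : L 1 = 1 := by
    apply hinj
    rw [← hL 1, Matrix.one_mul, Matrix.map_one _ (map_zero φ) (map_one φ), Matrix.mul_one]
  have hmul : ∀ A B, L (A * B) = L A * L B := by
    intro A B
    apply hinj
    rw [← hL (A * B), Matrix.mul_assoc, hL B, ← Matrix.mul_assoc, hL A,
      Matrix.mul_assoc, Matrix.map_mul]
  -- coset representative of 1
  obtain ⟨i0, ⟨h0, hh0⟩, -⟩ := hT 1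
  -- right cancellation by P
  have hPcancel : ∀ X X' : Matrix (Fin m) (Fin m) (MonoidAlgebra R G),
      X * P = X' * P → X = X' := by
    have entry : ∀ (X : Matrix (Fin m) (Fin m) (MonoidAlgebra R G)) (i k : Fin m),
        (X * P) i (i0, k) = X i k * MonoidAlgebra.of R G (T i0) := by
      intro X i k
      rw [Matrix.mul_apply, Finset.sum_eq_single k]
      · simp [hPdef]
      · intro k' _ hk'
        simp [hPdef, hk']
      · simp
    intro X X' h
    refine Matrix.ext fun i k => ?_
    have h1 := congrFun (congrFun h i) (i0, k)
    rw [entry, entry] at h1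
    exact ((Group.isUnit (T i0)).map (MonoidAlgebra.of R G)).mul_right_cancel h1
  -- right inverse Q of P
  set Q : Matrix (Fin r × Fin m) (Fin m) (MonoidAlgebra R G) :=
    Matrix.of (fun p i => if p = (i0, i) then MonoidAlgebra.of R G (f h0) else 0) with hQdef
  have hPQ : P * Q = 1 := by
    refine Matrix.ext fun i i' => ?_
    rw [Matrix.mul_apply, Finset.sum_eq_single ((i0 : Fin r), i')]
    · by_cases hii : i = i'
      · subst hii
        show (if i = i then MonoidAlgebra.of R G (T i0) else 0) *
            (if ((i0 : Fin r), i) = (i0, i) then MonoidAlgebra.of R G (f h0) else 0)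
            = (1 : Matrix (Fin m) (Fin m) (MonoidAlgebra R G)) i i
        rw [if_pos rfl, if_pos rfl, ← map_mul, ← hh0, map_one, Matrix.one_apply_eq]
      · show (if i = i' then MonoidAlgebra.of R G (T i0) else 0) *
            (if ((i0 : Fin r), i') = (i0, i') then MonoidAlgebra.of R G (f h0) else 0)
            = (1 : Matrix (Fin m) (Fin m) (MonoidAlgebra R G)) i i'
        rw [if_neg hii, zero_mul, Matrix.one_apply_ne hii]
    · intro p _ hp
      show P i p * (if p = (i0, i') then MonoidAlgebra.of R G (f h0) else 0) = 0
      rw [if_neg hp, mul_zero]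
    · simp
  constructor
  · intro A B
    rw [hmul, Matrix.det_mul]
  · intro A
    constructor
    · intro hA
      obtain ⟨B, hAB, hBA⟩ := isUnit_iff_exists.mp hA
      have h1 : (L A).det * (L B).det = 1 := by
        rw [← Matrix.det_mul, ← hmul, hAB, hone, Matrix.det_one]
      exact IsUnit.of_mul_eq_one _ h1
    · intro hdet
      have hU : IsUnit (L A) := (Matrix.isUnit_iff_isUnit_det _).mpr hdet
      obtain ⟨M, h1, h2⟩ := isUnit_iff_exists.mp hU
      set B := P * M.map φ * Q with hB
      have hAB : A * B = 1 := by
        rw [hB, ← Matrix.mul_assoc, ← Matrix.mul_assoc, hL A,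
          Matrix.mul_assoc P _ (M.map φ), ← Matrix.map_mul, h1,
          Matrix.map_one _ (map_zero φ) (map_one φ), Matrix.mul_one, hPQ]
      have hLB : L B = M := by
        have h3 : L A * L B = 1 := by rw [← hmul, hAB, hone]
        calc L B = 1 * L B := (one_mul _).symm
          _ = (M * L A) * L B := by rw [h2]
          _ = M * (L A * L B) := by rw [mul_assoc]
          _ = M := by rw [h3, mul_one]
      have hBA : B * A = 1 := by
        apply hPcancel
        rw [Matrix.mul_assoc, hL A, ← Matrix.mul_assoc, hL B, Matrix.mul_assoc,
          ← Matrix.map_mul, hLB, h2, Matrix.map_one _ (map_zero φ) (map_one φ),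
          Matrix.mul_one, Matrix.one_mul]
      exact isUnit_iff_exists.mpr ⟨B, hAB, hBA⟩
end

section
/- Let H be a normal abelian subgroup of finite index in G and \(\Phi_A(X) = \mathrm{Det}(X I_m - A)\) the characteristic polynomial of \(A \in \mathrm{Mat}(m, RG)\) over RH. Then \(\Phi_{g^{-1} A g}(X) = \Phi_A(X)\) for all \(g \in G\). -/
open MonoidAlgebra Matrix Polynomial

namespace CharpolyConjAux

/-- Conjugation invariance of charpoly with explicit two-sided inverses. -/
theorem charpoly_conj {n : Type*} [DecidableEq n] [Fintype n] {S : Type*} [CommRing S]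
    (P Q M : Matrix n n S) (hPQ : P * Q = 1) (hQP : Q * P = 1) :
    (Q * M * P).charpoly = M.charpoly := by
  have hsc : ∀ N : Matrix n n S[X], N * Matrix.scalar n (X : S[X]) =
      Matrix.scalar n (X : S[X]) * N := fun N =>
    (Matrix.scalar_commute (X : S[X]) (fun r => Commute.all X r) N).symm
  have hone : ((1 : Matrix n n S).map (C : S →+* S[X])) = 1 := by
    ext i j
    by_cases h : i = j <;> simp [h, Matrix.one_apply]
  have hmapQP : Q.map (C : S →+* S[X]) * P.map C = 1 := by
    rw [← Matrix.map_mul, hQP, hone]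
  have hmapPQ : P.map (C : S →+* S[X]) * Q.map C = 1 := by
    rw [← Matrix.map_mul, hPQ, hone]
  have hkey : Q.map (C : S →+* S[X]) * Matrix.scalar n (X : S[X]) * P.map C
      = Matrix.scalar n (X : S[X]) := by
    rw [hsc (Q.map C), mul_assoc, hmapQP, mul_one]
  have hm : charmatrix (Q * M * P) = Q.map (C : S →+* S[X]) * charmatrix M * P.map C := by
    unfold charmatrix
    rw [Matrix.mul_sub, Matrix.sub_mul, hkey]
    congr 1
    simp only [RingHom.mapMatrix_apply, Matrix.map_mul]
  rw [Matrix.charpoly, Matrix.charpoly, hm, Matrix.det_mul, Matrix.det_mul]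
  rw [mul_comm, ← mul_assoc, ← Matrix.det_mul, hmapPQ]
  simp

variable {R : Type*} [CommRing R] {G : Type*} [Group G] {H : Type*} [CommGroup H]

/-- The coset index of `g`. -/
noncomputable def idx {G : Type*} [Group G] {H : Type*} [CommGroup H] (f : H →* G) {r : ℕ}
    (T : Fin r → G) (hT : ∀ g : G, ∃! i : Fin r, ∃ h : H, g = T i * f h) (g : G) : Fin r :=
  (hT g).exists.choose

/-- The `H`-part of `g`. -/
noncomputable def elt {G : Type*} [Group G] {H : Type*} [CommGroup H] (f : H →* G) {r : ℕ}
    (T : Fin r → G) (hT : ∀ g : G, ∃! i : Fin r, ∃ h : H, g = T i * f h) (g : G) : H :=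
  (hT g).exists.choose_spec.choose

section

variable (f : H →* G) {r : ℕ} (T : Fin r → G)
  (hT : ∀ g : G, ∃! i : Fin r, ∃ h : H, g = T i * f h)

theorem idx_elt_spec (g : G) : g = T (idx f T hT g) * f (elt f T hT g) :=
  (hT g).exists.choose_spec.choose_spec

theorem idx_eq (hf : Function.Injective f) {g : G} {i : Fin r} {h : H}
    (hg : g = T i * f h) : idx f T hT g = i ∧ elt f T hT g = h := by
  obtain ⟨j, _, hu⟩ := hT g
  have h1 : i = j := hu i ⟨h, hg⟩
  have h2 : idx f T hT g = j := hu _ ⟨_, idx_elt_spec f T hT g⟩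
  have hidx : idx f T hT g = i := h2.trans h1.symm
  refine ⟨hidx, hf ?_⟩
  have := (idx_elt_spec f T hT g).symm.trans hg
  rw [hidx] at this
  exact mul_left_cancel this

theorem idx_mul_f (hf : Function.Injective f) (u : G) (h : H) :
    idx f T hT (u * f h) = idx f T hT u ∧ elt f T hT (u * f h) = elt f T hT u * h := by
  apply idx_eq f T hT hf
  rw [_root_.map_mul, ← mul_assoc, ← idx_elt_spec f T hT u]

end

section

variable (R : Type*) [CommRing R] (f : H →* G) {m r : ℕ} (T : Fin r → G)
  (hT : ∀ g : G, ∃! i : Fin r, ∃ h : H, g = T i * f h)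

/-- The matrix of coset representatives. -/
noncomputable def EM : Matrix (Fin m) (Fin r × Fin m) (MonoidAlgebra R G) :=
  Matrix.of fun i p => if i = p.2 then MonoidAlgebra.of R G (T p.1) else 0

/-- The permutation-with-H-entries matrix implementing left multiplication by `g`. -/
noncomputable def Pmat (g : G) : Matrix (Fin r × Fin m) (Fin r × Fin m) (MonoidAlgebra R H) :=
  Matrix.of fun q p =>
    if q = (idx f T hT (g * T p.1), p.2) then
      MonoidAlgebra.single (elt f T hT (g * T p.1)) (1 : R) else 0

theorem smul_EM (g : G) :
    ((MonoidAlgebra.of R G g) • (EM R T : Matrix (Fin m) (Fin r × Fin m) _) :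
      Matrix (Fin m) (Fin r × Fin m) (MonoidAlgebra R G))
      = EM (m := m) R T * (Pmat (m := m) R f T hT g).map (MonoidAlgebra.mapDomainRingHom R f) := by
  refine Matrix.ext fun i p => ?_
  rw [Matrix.mul_apply]
  have step : ∀ q : Fin r × Fin m,
      EM R T i q * ((Pmat R f T hT g).map (MonoidAlgebra.mapDomainRingHom R f)) q p
      = if q = (idx f T hT (g * T p.1), p.2) then
          EM R T i q * MonoidAlgebra.single (f (elt f T hT (g * T p.1))) (1 : R) else 0 := by
    intro q
    simp only [Pmat, Matrix.map_apply, Matrix.of_apply]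
    split
    · congr 1
      rw [MonoidAlgebra.mapDomainRingHom_apply, MonoidAlgebra.mapDomain_single]
    · simp
  rw [Finset.sum_congr rfl (fun q _ => step q), Finset.sum_ite_eq' Finset.univ]
  simp only [Finset.mem_univ, if_true]
  simp only [EM, Matrix.of_apply, Matrix.smul_apply, smul_eq_mul]
  by_cases hip : i = p.2
  · simp only [hip, if_true, MonoidAlgebra.of_apply]
    rw [MonoidAlgebra.single_mul_single, MonoidAlgebra.single_mul_single,
      ← idx_elt_spec f T hT (g * T p.1)]
  · simp [hip]

theorem Pmat_mul (hf : Function.Injective f) (a b : G) :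
    (Pmat R f T hT a : Matrix (Fin r × Fin m) (Fin r × Fin m) _) * Pmat R f T hT b
      = Pmat R f T hT (a * b) := by
  refine Matrix.ext fun q p => ?_
  rw [Matrix.mul_apply]
  have step : ∀ s : Fin r × Fin m,
      Pmat R f T hT a q s * Pmat R f T hT b s p
      = if s = (idx f T hT (b * T p.1), p.2) then
          Pmat R f T hT a q s * MonoidAlgebra.single (elt f T hT (b * T p.1)) (1 : R)
        else 0 := by
    intro s
    by_cases hs : s = (idx f T hT (b * T p.1), p.2)
    · subst hs; simp [Pmat]
    · simp [Pmat, hs]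
  rw [Finset.sum_congr rfl (fun s _ => step s), Finset.sum_ite_eq' Finset.univ]
  simp only [Finset.mem_univ, if_true]
  set u := b * T p.1 with hu
  have hTu : T (idx f T hT u) = u * (f (elt f T hT u))⁻¹ :=
    eq_mul_inv_iff_mul_eq.mpr (idx_elt_spec f T hT u).symm
  have hau : a * T (idx f T hT u) = (a * u) * f (elt f T hT u)⁻¹ := by
    rw [hTu, map_inv]; group
  have hidx : idx f T hT (a * T (idx f T hT u)) = idx f T hT (a * u) ∧
      elt f T hT (a * T (idx f T hT u)) = elt f T hT (a * u) * (elt f T hT u)⁻¹ := by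
    rw [hau]; exact idx_mul_f f T hT hf (a * u) _
  have habu : a * u = a * b * T p.1 := by rw [hu, mul_assoc]
  simp only [Pmat, Matrix.of_apply, hidx.1, hidx.2, habu]
  split
  · rw [MonoidAlgebra.single_mul_single, mul_one, inv_mul_cancel_right]
  · rw [zero_mul]

theorem Pmat_one (hf : Function.Injective f) :
    (Pmat R f T hT 1 : Matrix (Fin r × Fin m) (Fin r × Fin m) (MonoidAlgebra R H)) = 1 := by
  refine Matrix.ext fun q p => ?_
  have h1 : (1 : G) * T p.1 = T p.1 * f 1 := by simp
  obtain ⟨hi, he⟩ := idx_eq f T hT hf h1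
  simp only [Pmat, Matrix.of_apply, hi, he]
  by_cases h : q = p
  · simp [h, Matrix.one_apply, MonoidAlgebra.one_def]
  · have h' : ¬ q = (p.1, p.2) := by simpa using h
    simp [h', Matrix.one_apply, h]


include hT in
theorem sum_of_mapDomain_inj (hf : Function.Injective f)
    (x y : Fin r → MonoidAlgebra R H)
    (h : ∑ j, MonoidAlgebra.of R G (T j) * MonoidAlgebra.mapDomainRingHom R f (x j)
       = ∑ j, MonoidAlgebra.of R G (T j) * MonoidAlgebra.mapDomainRingHom R f (y j)) : x = y := by
  funext j
  ext a
  have key : ∀ z : Fin r → MonoidAlgebra R H,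
      (∑ i, MonoidAlgebra.of R G (T i) * MonoidAlgebra.mapDomainRingHom R f (z i)).coeff (T j * f a) = (z j).coeff a := by
    intro z
    rw [MonoidAlgebra.coeff_sum, Finsupp.finset_sum_apply]
    rw [Finset.sum_eq_single j]
    · rw [MonoidAlgebra.of_apply, MonoidAlgebra.coeff_single_mul_apply, one_mul,
        inv_mul_cancel_left, MonoidAlgebra.mapDomainRingHom_apply, MonoidAlgebra.coeff_mapDomain]
      exact Finsupp.mapDomain_apply hf _ _
    · intro i _ hij
      rw [MonoidAlgebra.of_apply, MonoidAlgebra.coeff_single_mul_apply, one_mul,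
        MonoidAlgebra.mapDomainRingHom_apply, MonoidAlgebra.coeff_mapDomain]
      apply Finsupp.mapDomain_notin_range
      rintro ⟨b, hb⟩
      have hb' : T j * f a = T i * f b := by rw [hb, mul_inv_cancel_left]
      obtain ⟨i0, _, hu⟩ := hT (T j * f a)
      exact hij ((hu i ⟨b, hb'⟩).trans (hu j ⟨a, rfl⟩).symm)
    · simp
  have h1 := key x
  have h2 := key y
  rw [h] at h1
  exact h1.symm.trans h2

include hT in
theorem EM_mul_inj (hf : Function.Injective f)
    (M N : Matrix (Fin r × Fin m) (Fin r × Fin m) (MonoidAlgebra R H))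
    (h : EM (m := m) R T * M.map (MonoidAlgebra.mapDomainRingHom R f)
       = EM (m := m) R T * N.map (MonoidAlgebra.mapDomainRingHom R f)) : M = N := by
  have hmd : ∀ z : MonoidAlgebra R H,
      (MonoidAlgebra.mapDomainRingHom R f) z = MonoidAlgebra.mapDomain f z := fun _ => rfl
  have reduce : ∀ (M : Matrix (Fin r × Fin m) (Fin r × Fin m) (MonoidAlgebra R H))
      (i : Fin m) (q : Fin r × Fin m),
      ((EM R T : Matrix (Fin m) (Fin r × Fin m) (MonoidAlgebra R G))
        * M.map (MonoidAlgebra.mapDomainRingHom R f)) i q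
      = ∑ j : Fin r, MonoidAlgebra.of R G (T j) * MonoidAlgebra.mapDomainRingHom R f (M (j, i) q) := by
    intro M i q
    rw [Matrix.mul_apply, Fintype.sum_prod_type]
    refine Finset.sum_congr rfl fun j _ => ?_
    simp only [EM, Matrix.of_apply, Matrix.map_apply, hmd, ite_mul, zero_mul,
      Finset.sum_ite_eq, Finset.mem_univ, if_true]
  refine Matrix.ext fun p q => ?_
  obtain ⟨j, i⟩ := p
  have h' : (∑ j : Fin r, MonoidAlgebra.of R G (T j) * MonoidAlgebra.mapDomainRingHom R f (M (j, i) q))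
      = ∑ j : Fin r, MonoidAlgebra.of R G (T j) * MonoidAlgebra.mapDomainRingHom R f (N (j, i) q) := by
    rw [← reduce M i q, ← reduce N i q, h]
  exact congrFun (sum_of_mapDomain_inj R f T hT hf _ _ h') j

end

end CharpolyConjAux

/-- For a normal abelian subgroup (the range of an injective hom `f : H →* G`) of finite
index, the characteristic polynomial `Φ_A(X) = Det(X·1 - A) = charpoly (L_T A)` over `RH`
is invariant under conjugation: `Φ_{g⁻¹ A g} = Φ_A` for every `g ∈ G`. -/
theorem charpoly_conj_invariant {R : Type*} [CommRing R] {G : Type*} [Group G]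
    {H : Type*} [CommGroup H] (f : H →* G) (hf : Function.Injective f)
    (hnormal : f.range.Normal) {m r : ℕ}
    (T : Fin r → G) (hT : ∀ g : G, ∃! i : Fin r, ∃ h : H, g = T i * f h)
    (L : Matrix (Fin m) (Fin m) (MonoidAlgebra R G) →
      Matrix (Fin r × Fin m) (Fin r × Fin m) (MonoidAlgebra R H))
    (hL : ∀ A, A * Matrix.of (fun (i : Fin m) (p : Fin r × Fin m) =>
        if i = p.2 then MonoidAlgebra.of R G (T p.1) else 0)
      = Matrix.of (fun (i : Fin m) (p : Fin r × Fin m) =>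
        if i = p.2 then MonoidAlgebra.of R G (T p.1) else 0)
        * (L A).map (MonoidAlgebra.mapDomainRingHom R f)) :
    ∀ (g : G) (A : Matrix (Fin m) (Fin m) (MonoidAlgebra R G)),
      (L (Matrix.of fun i j : Fin m =>
        MonoidAlgebra.of R G g⁻¹ * A i j * MonoidAlgebra.of R G g)).charpoly =
      (L A).charpoly := by
  intro g A
  classical
  open CharpolyConjAux in
  have hE : (Matrix.of (fun (i : Fin m) (p : Fin r × Fin m) =>
      if i = p.2 then MonoidAlgebra.of R G (T p.1) else 0)) = EM (m := m) R T := rfl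
  rw [hE] at hL
  set A' : Matrix (Fin m) (Fin m) (MonoidAlgebra R G) :=
    Matrix.of fun i j : Fin m =>
      MonoidAlgebra.of R G g⁻¹ * A i j * MonoidAlgebra.of R G g with hA'
  have step1 : A' * EM (m := m) R T
      = ((MonoidAlgebra.of R G g⁻¹) • (A * ((MonoidAlgebra.of R G g) • EM (m := m) R T)) :
        Matrix (Fin m) (Fin r × Fin m) (MonoidAlgebra R G)) := by
    refine Matrix.ext fun i p => ?_
    simp [hA', Matrix.mul_apply, Matrix.smul_apply, smul_eq_mul, Finset.mul_sum, mul_assoc]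
  have chain : A' * EM (m := m) R T
      = EM (m := m) R T * ((Pmat R f T hT g⁻¹ * L A) * Pmat R f T hT g).map (MonoidAlgebra.mapDomainRingHom R f) := by
    rw [step1, smul_EM R f T hT g, ← Matrix.mul_assoc, hL A, Matrix.mul_assoc,
      ← Matrix.smul_mul, smul_EM R f T hT g⁻¹, Matrix.map_mul, Matrix.map_mul]
    simp only [Matrix.mul_assoc]
  have hLA' : L A' = Pmat R f T hT g⁻¹ * L A * Pmat R f T hT g := by
    apply EM_mul_inj R f T hT hf
    rw [← hL A', chain, Matrix.mul_assoc]
  rw [hLA']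
  refine charpoly_conj (Pmat R f T hT g) (Pmat R f T hT g⁻¹) (L A) ?_ ?_
  · rw [Pmat_mul R f T hT hf, mul_inv_cancel, Pmat_one R f T hT hf]
  · rw [Pmat_mul R f T hT hf, inv_mul_cancel, Pmat_one R f T hT hf]
end

section
/- Cayley–Hamilton type theorem: Let H be an abelian subgroup of finite index in G and \(\Phi_A(X) = X^{m[G:H]} + a_{(m-1)[G:H]} X^{(m-1)[G:H]} + \cdots + a_0\) the characteristic polynomial of \(A \in \mathrm{Mat}(m, RG)\) over RH. Then \(A^{m[G:H]} + a_{(m-1)[G:H]} A^{(m-1)[G:H]} + \cdots + a_0 I_m = 0\) in \(\mathrm{Mat}(m, RG)\). -/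
/-- **Cayley–Hamilton type theorem.** For an abelian subgroup (the range of an injective
hom `f : H →* G`) of finite index `r`, any `A ∈ Mat(m, RG)` satisfies its characteristic
polynomial `Φ_A(X) = det(X·1 - L_T A)` over `RH`:
`∑ i, aᵢ A^i = 0`, the coefficients `aᵢ ∈ RH` acting on `Mat(m, RG)` through `RH ⊆ RG`. -/
theorem cayley_hamilton_type {R : Type*} [CommRing R] {G : Type*} [Group G]
    {H : Type*} [CommGroup H] (f : H →* G) (hf : Function.Injective f) {m r : ℕ}
    (T : Fin r → G) (hT : ∀ g : G, ∃! i : Fin r, ∃ h : H, g = T i * f h)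
    (L : Matrix (Fin m) (Fin m) (MonoidAlgebra R G) →
      Matrix (Fin r × Fin m) (Fin r × Fin m) (MonoidAlgebra R H))
    (hL : ∀ A, A * Matrix.of (fun (i : Fin m) (p : Fin r × Fin m) =>
        if i = p.2 then MonoidAlgebra.of R G (T p.1) else 0)
      = Matrix.of (fun (i : Fin m) (p : Fin r × Fin m) =>
        if i = p.2 then MonoidAlgebra.of R G (T p.1) else 0)
        * (L A).map (MonoidAlgebra.mapDomainRingHom R f))
    (A : Matrix (Fin m) (Fin m) (MonoidAlgebra R G)) :
    ∑ i ∈ Finset.range (r * m + 1),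
      MonoidAlgebra.mapDomainRingHom R f ((L A).charpoly.coeff i) • A ^ i = 0 := by
  classical
  rcases subsingleton_or_nontrivial R with hR | hR
  · haveI : Subsingleton (MonoidAlgebra R G) :=
      ⟨fun x y => MonoidAlgebra.ext (Finsupp.ext fun g => Subsingleton.elim _ _)⟩
    haveI : Subsingleton (Matrix (Fin m) (Fin m) (MonoidAlgebra R G)) :=
      ⟨fun x y => by ext i j; exact Subsingleton.elim _ _⟩
    exact Subsingleton.elim _ _
  set φ := MonoidAlgebra.mapDomainRingHom R f with hφ
  set P : Matrix (Fin m) (Fin r × Fin m) (MonoidAlgebra R G) :=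
    Matrix.of (fun i p => if i = p.2 then MonoidAlgebra.of R G (T p.1) else 0) with hPdef
  set B := L A with hB
  have hφap : ∀ x, φ x = MonoidAlgebra.mapDomain f x := fun x => rfl
  obtain ⟨k0, ⟨h0, hk0⟩, _⟩ := hT 1
  have hTk0 : T k0 = (f h0)⁻¹ := by
    rw [eq_inv_iff_mul_eq_one]; exact hk0.symm
  -- uniqueness of coset representatives
  have huniq : ∀ (s k : Fin r) (h' h2 : H), T k * f h' = T s * f h2 → s = k := by
    intro s k h' h2 hst
    obtain ⟨i, -, hiu⟩ := hT (T k)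
    have e1 : s = i := hiu s ⟨h2 * h'⁻¹, by rw [map_mul, map_inv, ← mul_assoc, ← hst,
      mul_assoc, mul_inv_cancel, mul_one]⟩
    have e2 : k = i := hiu k ⟨1, by simp⟩
    rw [e1, e2]
  -- powers intertwine
  have hpow : ∀ i : ℕ, A ^ i * P = P * ((B ^ i).map φ) := by
    intro i
    induction i with
    | zero =>
      rw [pow_zero, pow_zero, Matrix.one_mul, Matrix.map_one _ (map_zero φ) (map_one φ),
        Matrix.mul_one]
    | succ n ih =>
      calc A ^ (n + 1) * P = A ^ n * (A * P) := by rw [pow_succ, Matrix.mul_assoc]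
        _ = A ^ n * (P * (B.map φ)) := by rw [hL A]
        _ = (A ^ n * P) * B.map φ := by rw [Matrix.mul_assoc]
        _ = P * ((B ^ n).map φ * B.map φ) := by rw [ih, Matrix.mul_assoc]
        _ = P * ((B ^ (n + 1)).map φ) := by rw [← Matrix.map_mul, ← pow_succ]
  -- entrywise form of hpow
  have hstar : ∀ (i : ℕ) (a b : Fin m) (k' : Fin r),
      (A ^ i) a b * MonoidAlgebra.single (T k') (1 : R)
        = ∑ s : Fin r, MonoidAlgebra.single (T s) (1 : R) * φ ((B ^ i) (s, a) (k', b)) := by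
    intro i a b k'
    have h1 := congrFun (congrFun (hpow i) a) (k', b)
    have hL1 : (A ^ i * P) a (k', b)
        = (A ^ i) a b * MonoidAlgebra.single (T k') (1 : R) := by
      rw [Matrix.mul_apply]
      rw [Finset.sum_eq_single b]
      · simp [hPdef, MonoidAlgebra.of_apply]
      · intro j _ hj
        simp [hPdef, hj]
      · simp
    have hR1 : (P * (B ^ i).map φ) a (k', b)
        = ∑ s : Fin r, MonoidAlgebra.single (T s) (1 : R) * φ ((B ^ i) (s, a) (k', b)) := by
      rw [Matrix.mul_apply, Fintype.sum_prod_type]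
      refine Finset.sum_congr rfl fun s _ => ?_
      rw [Finset.sum_eq_single a]
      · simp [hPdef, MonoidAlgebra.of_apply]
      · intro j _ hj
        simp [hPdef, Ne.symm hj]
      · simp
    rw [← hL1, h1, hR1]
  -- key pointwise identity
  have hkey : ∀ (i : ℕ) (a b : Fin m) (k' : Fin r) (h : H),
      ((A ^ i) a b * MonoidAlgebra.single (T k') (1 : R)).coeff (T k0 * f h)
        = ((B ^ i) (k0, a) (k', b)).coeff h := by
    intro i a b k' h
    have := congrArg (fun z : MonoidAlgebra R G => z.coeff (T k0 * f h)) (hstar i a b k')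
    rw [this, MonoidAlgebra.coeff_sum, Finsupp.finset_sum_apply]
    rw [Finset.sum_eq_single k0]
    · rw [MonoidAlgebra.coeff_single_mul_apply, one_mul, inv_mul_cancel_left]
      rw [hφap, MonoidAlgebra.coeff_mapDomain, Finsupp.mapDomain_apply hf]
    · intro s _ hs
      rw [MonoidAlgebra.coeff_single_mul_apply, one_mul, hφap]
      rw [MonoidAlgebra.coeff_mapDomain, Finsupp.mapDomain_notin_range]
      rintro ⟨h2, hh2⟩
      exact hs (huniq s k0 h h2 (by rw [hh2, mul_inv_cancel_left]))
    · simp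
  -- Cayley-Hamilton for B
  have hch : ∑ i ∈ Finset.range (r * m + 1), B.charpoly.coeff i • B ^ i = 0 := by
    have hdeg : B.charpoly.natDegree < r * m + 1 := by
      rw [Matrix.charpoly_natDegree_eq_dim]
      simp [Fintype.card_prod, Nat.lt_succ_self]
    have h2 := Matrix.aeval_self_charpoly B
    rwa [Polynomial.aeval_eq_sum_range' hdeg] at h2
  -- multiplication lemma through f
  have hEPS : ∀ (c : MonoidAlgebra R H) (u : MonoidAlgebra R G) (v : MonoidAlgebra R H),
      (∀ h : H, u.coeff (f h) = v.coeff h) → ∀ h' : H, (φ c * u).coeff (f h') = (c * v).coeff h' := by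
    intro c
    induction c using MonoidAlgebra.induction_linear with
    | zero => intro u v huv h'; simp
    | add c1 c2 ih1 ih2 =>
      intro u v huv h'
      rw [map_add, add_mul, add_mul, MonoidAlgebra.coeff_add, MonoidAlgebra.coeff_add, Finsupp.add_apply, Finsupp.add_apply,
        ih1 u v huv h', ih2 u v huv h']
    | single h c0 =>
      intro u v huv h'
      rw [hφap, MonoidAlgebra.mapDomain_single]
      rw [MonoidAlgebra.coeff_single_mul_apply, MonoidAlgebra.coeff_single_mul_apply]
      rw [← map_inv, ← map_mul, huv]
  -- final computation
  refine Matrix.ext fun a b => ?_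
  show (∑ i ∈ Finset.range (r * m + 1), φ (B.charpoly.coeff i) • A ^ i) a b = (0 : Matrix (Fin m) (Fin m) (MonoidAlgebra R G)) a b
  rw [Matrix.sum_apply, Matrix.zero_apply]
  have hSentry : ∀ i ∈ Finset.range (r * m + 1),
      (φ (B.charpoly.coeff i) • A ^ i) a b = φ (B.charpoly.coeff i) * (A ^ i) a b := by
    intro i _; rw [Matrix.smul_apply, smul_eq_mul]
  rw [Finset.sum_congr rfl hSentry]
  set S : MonoidAlgebra R G :=
    ∑ i ∈ Finset.range (r * m + 1), φ (B.charpoly.coeff i) * (A ^ i) a b with hS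
  -- main claim
  have hclaim : ∀ (k' : Fin r) (h' : H),
      (S * MonoidAlgebra.single (T k') (1 : R)).coeff (f h') = 0 := by
    intro k' h'
    have hdist : S * MonoidAlgebra.single (T k') (1 : R)
        = ∑ i ∈ Finset.range (r * m + 1),
            φ (B.charpoly.coeff i) * ((A ^ i) a b * MonoidAlgebra.single (T k') (1 : R)) := by
      rw [hS, Finset.sum_mul]
      exact Finset.sum_congr rfl fun i _ => by rw [mul_assoc]
    rw [hdist, MonoidAlgebra.coeff_sum, Finsupp.finset_sum_apply]
    have hterm : ∀ i ∈ Finset.range (r * m + 1),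
        (φ (B.charpoly.coeff i) * ((A ^ i) a b * MonoidAlgebra.single (T k') (1 : R))).coeff (f h')
          = (MonoidAlgebra.single h0⁻¹ (1 : R) * (B.charpoly.coeff i * (B ^ i) (k0, a) (k', b))).coeff h' := by
      intro i _
      rw [mul_left_comm]
      refine hEPS _ _ _ (fun h => ?_) h'
      rw [MonoidAlgebra.coeff_single_mul_apply, one_mul, inv_inv]
      have : f h = T k0 * f (h0 * h) := by
        rw [map_mul, hTk0, ← mul_assoc, inv_mul_cancel, one_mul]
      rw [this, hkey i a b k' (h0 * h)]
    rw [Finset.sum_congr rfl hterm, ← Finsupp.finset_sum_apply, ← MonoidAlgebra.coeff_sum]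
    have hfac : (∑ i ∈ Finset.range (r * m + 1), MonoidAlgebra.single h0⁻¹ (1 : R)
          * (B.charpoly.coeff i * (B ^ i) (k0, a) (k', b)))
        = MonoidAlgebra.single h0⁻¹ (1 : R)
          * ∑ i ∈ Finset.range (r * m + 1), B.charpoly.coeff i * (B ^ i) (k0, a) (k', b) :=
      (Finset.mul_sum _ _ _).symm
    rw [hfac]
    have hchE : ∑ i ∈ Finset.range (r * m + 1),
        B.charpoly.coeff i * (B ^ i) (k0, a) (k', b) = 0 := by
      have := congrFun (congrFun hch (k0, a)) (k', b)
      rw [Matrix.sum_apply, Matrix.zero_apply] at this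
      rw [← this]
      exact Finset.sum_congr rfl fun i _ => by rw [Matrix.smul_apply, smul_eq_mul]
    rw [hchE, mul_zero, MonoidAlgebra.coeff_zero, Finsupp.zero_apply]
  -- conclude S = 0
  refine MonoidAlgebra.ext (Finsupp.ext fun g => ?_)
  obtain ⟨k', ⟨h1, hg⟩, -⟩ := hT g⁻¹
  have hg' : g = f h1⁻¹ * (T k')⁻¹ := by
    rw [map_inv, ← mul_inv_rev, ← hg, inv_inv]
  have := hclaim k' h1⁻¹
  rw [MonoidAlgebra.coeff_mul_single_apply, mul_one] at this
  rw [MonoidAlgebra.coeff_zero, Finsupp.zero_apply, hg']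
  exact this
end

section
/- Let G be a finite group, R a commutative \(\mathbb{C}\)-algebra, and \(\alpha = \sum_{g \in G} x_g g \in RG\) with \(x_g \in R\). Then \(\alpha\) is invertible in RG if and only if \(\det((x_{g h^{-1}})_{g,h \in G})\) is invertible in R. -/
/-- For a finite group `G` and a commutative `ℂ`-algebra `R`, the element
`α = ∑ g, x_g g` of the group algebra `RG` is invertible if and only if the group
determinant `det (x_{g h⁻¹})` is invertible in `R`. -/
theorem isUnit_monoidAlgebra_iff_isUnit_groupDeterminant {G : Type*} [Group G]
    [Fintype G] [DecidableEq G] {R : Type*} [CommRing R] [Algebra ℂ R] (x : G → R) :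
    IsUnit (∑ g : G, MonoidAlgebra.single g (x g) : MonoidAlgebra R G) ↔
      IsUnit (Matrix.det (Matrix.of fun g h : G => x (g * h⁻¹))) := by
  classical
  set α : MonoidAlgebra R G := ∑ g : G, MonoidAlgebra.single g (x g) with hα
  have hcoef : ∀ u : G, α.coeff u = x u := by
    intro u
    rw [hα, MonoidAlgebra.coeff_sum, Finset.sum_apply']
    simp [Finsupp.single_apply, MonoidAlgebra.coeff_single]
  let b : Module.Basis G R (MonoidAlgebra R G) := MonoidAlgebra.basis G R
  have key : LinearMap.toMatrix b b (LinearMap.mul R (MonoidAlgebra R G) α) =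
      Matrix.of fun g h : G => x (g * h⁻¹) := by
    ext g h
    rw [LinearMap.toMatrix_apply]
    have hb : b h = MonoidAlgebra.single h 1 := rfl
    rw [hb, LinearMap.mul_apply']
    change (α * MonoidAlgebra.single h 1).coeff g = _
    have hms := MonoidAlgebra.mul_single_apply α (1 : R) h g
    simp only [mul_one, hcoef] at hms
    exact hms
  have halg : (LinearMap.toMatrixAlgEquiv b) (LinearMap.mul R (MonoidAlgebra R G) α) =
      LinearMap.toMatrix b b (LinearMap.mul R (MonoidAlgebra R G) α) := rfl
  rw [← Matrix.isUnit_iff_isUnit_det, ← key, ← halg]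
  constructor
  · intro h
    exact (Algebra.lmul_isUnit_iff.mpr h).map (LinearMap.toMatrixAlgEquiv b)
  · intro h
    have := h.map (LinearMap.toMatrixAlgEquiv b).symm
    rw [(LinearMap.toMatrixAlgEquiv b).symm_apply_apply] at this
    exact Algebra.lmul_isUnit_iff.mp this
end

section
/- Let G be a finite abelian group, H a subgroup, T a complete set of coset representatives of H in G, and L the left regular representation \(\mathrm{Mat}(m, RG) \to \mathrm{Mat}(m[G:H], RH)\). For \(A = \sum_{t \in T} t A_t\) with \(A_t \in \mathrm{Mat}(m, RH)\), we have \(\det(L(A)) = \prod_{\chi \in \widehat{G/H}} \det\left(\sum_{t \in T} \chi(tH)\, t A_t\right)\). -/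
open Matrix MonoidAlgebra

/-- Sum of a nontrivial complex character over a finite abelian group. -/
lemma sum_char_eq_ite {Q : Type*} [CommGroup Q] [Fintype Q] (ψ : Q →* ℂˣ) :
    ∑ x : Q, (ψ x : ℂ) = if ψ = 1 then (Fintype.card Q : ℂ) else 0 := by
  split_ifs with h
  · subst h; simp
  · obtain ⟨x₀, hx₀⟩ : ∃ x₀, ψ x₀ ≠ 1 := by
      by_contra hc; push_neg at hc; exact h (MonoidHom.ext fun x => hc x)
    have h1 : ∑ x : Q, (ψ (x₀ * x) : ℂ) = ∑ x : Q, (ψ x : ℂ) :=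
      Equiv.sum_comp (Equiv.mulLeft x₀) (fun x => (ψ x : ℂ))
    have h2 : ∑ x : Q, (ψ (x₀ * x) : ℂ) = (ψ x₀ : ℂ) * ∑ x : Q, (ψ x : ℂ) := by
      rw [Finset.mul_sum]; refine Finset.sum_congr rfl fun x _ => ?_
      rw [_root_.map_mul, Units.val_mul]
    have h3 : ((ψ x₀ : ℂ) - 1) * ∑ x : Q, (ψ x : ℂ) = 0 := by
      rw [sub_mul, one_mul, ← h2, h1, sub_self]
    rcases mul_eq_zero.mp h3 with h4 | h4
    · exact absurd (Units.ext (by simpa using sub_eq_zero.mp h4)) hx₀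
    · exact h4

/-- For a finite abelian group `G`, a subgroup `H` with complete set `T` of coset
representatives, and the left regular representation
`L : Mat(m, RG) → Mat(m[G:H], RH)`, the determinant of `L(A)` (for `A = ∑ t, t Aₜ`)
factors as `∏_{χ ∈ (G/H)^} det (∑ t, χ(tH) t Aₜ)`.
(Stated inside `RG` via the canonical embedding `RH → RG`.) -/
theorem det_regular_rep_factorization {R : Type*} [CommRing R] [Algebra ℂ R]
    {G : Type*} [CommGroup G] (H : Subgroup G) [Fintype ((G ⧸ H) →* ℂˣ)] {m r : ℕ}
    (T : Fin r → G) (hT : ∀ g : G, ∃! i : Fin r, (T i)⁻¹ * g ∈ H)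
    (L : Matrix (Fin m) (Fin m) (MonoidAlgebra R G) →
      Matrix (Fin r × Fin m) (Fin r × Fin m) (MonoidAlgebra R ↥H))
    (hL : ∀ A, A * Matrix.of (fun (i : Fin m) (p : Fin r × Fin m) =>
        if i = p.2 then MonoidAlgebra.of R G (T p.1) else 0)
      = Matrix.of (fun (i : Fin m) (p : Fin r × Fin m) =>
        if i = p.2 then MonoidAlgebra.of R G (T p.1) else 0)
        * (L A).map (MonoidAlgebra.mapDomainRingHom R H.subtype))
    (A : Matrix (Fin m) (Fin m) (MonoidAlgebra R G))
    (At : Fin r → Matrix (Fin m) (Fin m) (MonoidAlgebra R ↥H))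
    (hA : A = ∑ t : Fin r, MonoidAlgebra.of R G (T t) •
      (At t).map (MonoidAlgebra.mapDomainRingHom R H.subtype)) :
    MonoidAlgebra.mapDomainRingHom R H.subtype (L A).det =
      ∏ χ : (G ⧸ H) →* ℂˣ,
        Matrix.det (∑ t : Fin r,
          (algebraMap ℂ (MonoidAlgebra R G) (χ (QuotientGroup.mk (T t)) : ℂ)) •
            (MonoidAlgebra.of R G (T t) •
              (At t).map (MonoidAlgebra.mapDomainRingHom R H.subtype))) := by
  classical
  set ι : MonoidAlgebra R ↥H →+* MonoidAlgebra R G :=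
    MonoidAlgebra.mapDomainRingHom R H.subtype with hιdef
  -- coset representatives give an equivalence `Fin r ≃ G ⧸ H`
  have hmk : ∀ (i : Fin r) (g : G),
      ((QuotientGroup.mk (T i) : G ⧸ H) = QuotientGroup.mk g) ↔ (T i)⁻¹ * g ∈ H :=
    fun i g => QuotientGroup.eq
  have hbij : Function.Bijective (fun i : Fin r => (QuotientGroup.mk (T i) : G ⧸ H)) := by
    constructor
    · intro i j hij
      have hj : (T j)⁻¹ * (T j) ∈ H := by simpa using H.one_mem
      have hi : (T i)⁻¹ * (T j) ∈ H := (hmk i (T j)).mp hij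
      obtain ⟨k, -, hk⟩ := hT (T j)
      rw [hk i hi, hk j hj]
    · intro q
      obtain ⟨g, rfl⟩ := QuotientGroup.mk_surjective q
      obtain ⟨i, hi, -⟩ := hT g
      exact ⟨i, (hmk i g).mpr hi⟩
  let eT : Fin r ≃ G ⧸ H := Equiv.ofBijective _ hbij
  haveI : Fintype (G ⧸ H) := Fintype.ofEquiv _ eT
  have hcardQ : Fintype.card (G ⧸ H) = r := by
    rw [← Fintype.card_fin r]; exact (Fintype.card_congr eT).symm
  have hr0 : r ≠ 0 := by
    rw [← hcardQ]; exact Fintype.card_ne_zero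
  haveI : NeZero (Monoid.exponent (G ⧸ H)) := ⟨Monoid.exponent_ne_zero_of_finite⟩
  obtain ⟨dualEquiv⟩ := CommGroup.monoidHom_mulEquiv_of_hasEnoughRootsOfUnity (G ⧸ H) ℂ
  have hcardχ : Fintype.card ((G ⧸ H) →* ℂˣ) = r := by
    rw [Fintype.card_congr dualEquiv.toEquiv, hcardQ]
  let e : ((G ⧸ H) →* ℂˣ) ≃ Fin r := Fintype.equivFinOfCardEq hcardχ
  let χa : Fin r → ((G ⧸ H) →* ℂˣ) := e.symm
  -- the twisted character monoid homs and algebra homs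
  let f : ((G ⧸ H) →* ℂˣ) → (G →* MonoidAlgebra R G) := fun χ =>
    ((algebraMap ℂ (MonoidAlgebra R G)) : ℂ →* MonoidAlgebra R G).comp
      ((Units.coeHom ℂ).comp (χ.comp (QuotientGroup.mk' H)))
  let ψ : ((G ⧸ H) →* ℂˣ) → (G →* MonoidAlgebra R G) := fun χ =>
    f χ * MonoidAlgebra.of R G
  have hψ : ∀ χ g, ψ χ g =
      algebraMap ℂ (MonoidAlgebra R G) (χ (QuotientGroup.mk g) : ℂ) * MonoidAlgebra.of R G g :=
    fun χ g => rfl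
  let φ : ((G ⧸ H) →* ℂˣ) → (MonoidAlgebra R G →ₐ[R] MonoidAlgebra R G) := fun χ =>
    MonoidAlgebra.lift R _ G (ψ χ)
  have hφof : ∀ χ g, φ χ (MonoidAlgebra.of R G g) =
      algebraMap ℂ (MonoidAlgebra R G) (χ (QuotientGroup.mk g) : ℂ) * MonoidAlgebra.of R G g :=
    fun χ g => MonoidAlgebra.lift_of _ _
  have hφι : ∀ χ (x : MonoidAlgebra R ↥H), φ χ (ι x) = ι x := by
    intro χ x
    have key : (φ χ).comp (MonoidAlgebra.mapDomainAlgHom R R H.subtype)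
        = MonoidAlgebra.mapDomainAlgHom R R H.subtype := by
      apply MonoidAlgebra.algHom_ext
      intro h
      have h1 : (MonoidAlgebra.mapDomainAlgHom R R H.subtype) (MonoidAlgebra.single h (1:R))
          = MonoidAlgebra.of R G (H.subtype h) := by
        simp [MonoidAlgebra.mapDomainAlgHom_apply, Finsupp.mapDomain_single,
          MonoidAlgebra.of_apply]
      rw [AlgHom.comp_apply, h1, hφof]
      have h2 : (QuotientGroup.mk (H.subtype h) : G ⧸ H) = 1 :=
        (QuotientGroup.eq_one_iff _).mpr h.2
      rw [h2, _root_.map_one, Units.val_one, _root_.map_one, one_mul]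
      exact Subsingleton.elim _ _
    exact AlgHom.congr_fun key x
  -- structural matrices
  set M0 : Matrix (Fin m) (Fin r × Fin m) (MonoidAlgebra R G) :=
    Matrix.of (fun (i : Fin m) (p : Fin r × Fin m) =>
      if i = p.2 then MonoidAlgebra.of R G (T p.1) else 0) with hM0
  set C : Matrix (Fin r × Fin m) (Fin r × Fin m) (MonoidAlgebra R G) := (L A).map ι with hC
  have hLA : A * M0 = M0 * C := hL A
  let u : ((G ⧸ H) →* ℂˣ) → Fin r → MonoidAlgebra R G := fun χ j =>
    algebraMap ℂ (MonoidAlgebra R G) (χ (QuotientGroup.mk (T j)) : ℂ) * MonoidAlgebra.of R G (T j)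
  have hCmap : ∀ χ, C.map ((φ χ : MonoidAlgebra R G →+* MonoidAlgebra R G)) = C := by
    intro χ; refine Matrix.ext fun p q => ?_
    simp only [hC, Matrix.map_apply, RingHom.coe_coe]
    exact hφι χ _
  have hM0map : ∀ χ, M0.map ((φ χ : MonoidAlgebra R G →+* MonoidAlgebra R G)) =
      Matrix.of (fun (i : Fin m) (p : Fin r × Fin m) => if i = p.2 then u χ p.1 else 0) := by
    intro χ; refine Matrix.ext fun i p => ?_
    rw [hM0]
    simp only [Matrix.map_apply, Matrix.of_apply, RingHom.coe_coe]
    by_cases h : i = p.2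
    · rw [if_pos h, if_pos h]; exact hφof χ (T p.1)
    · rw [if_neg h, if_neg h, map_zero]
  have hrel : ∀ χ, (A.map ((φ χ : MonoidAlgebra R G →+* MonoidAlgebra R G)))
      * Matrix.of (fun (i : Fin m) (p : Fin r × Fin m) => if i = p.2 then u χ p.1 else 0)
      = Matrix.of (fun (i : Fin m) (p : Fin r × Fin m) => if i = p.2 then u χ p.1 else 0) * C := by
    intro χ
    have h1 : ((A * M0).map ((φ χ : MonoidAlgebra R G →+* MonoidAlgebra R G)) : Matrix _ _ _)
        = (M0 * C).map ((φ χ : MonoidAlgebra R G →+* MonoidAlgebra R G)) := by rw [hLA]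
    rw [Matrix.map_mul, Matrix.map_mul, hCmap, hM0map] at h1
    exact h1
  -- the big change-of-basis matrix and the block-diagonal matrix
  let V : Matrix (Fin r × Fin m) (Fin r × Fin m) (MonoidAlgebra R G) :=
    Matrix.of fun p q => if p.2 = q.2 then u (χa p.1) q.1 else 0
  let B : Matrix (Fin r × Fin m) (Fin r × Fin m) (MonoidAlgebra R G) :=
    Matrix.of fun p q => if p.1 = q.1
      then (A.map ((φ (χa p.1) : MonoidAlgebra R G →+* MonoidAlgebra R G))) p.2 q.2 else 0
  have hVC : V * C = B * V := by
    refine Matrix.ext fun p q => ?_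
    obtain ⟨a, k⟩ := p; obtain ⟨j, l⟩ := q
    have h1 := congrFun (congrFun (hrel (χa a)) k) (j, l)
    rw [Matrix.mul_apply, Matrix.mul_apply] at h1
    simp only [Matrix.of_apply, Fintype.sum_prod_type, ite_mul, mul_ite, zero_mul,
      mul_zero, Finset.sum_ite_eq, Finset.sum_ite_eq', Finset.mem_univ, if_true] at h1
    rw [Matrix.mul_apply, Matrix.mul_apply]
    simp only [Matrix.of_apply, Fintype.sum_prod_type, ite_mul, mul_ite, zero_mul,
      mul_zero, Finset.sum_ite_eq, Finset.sum_ite_eq', Finset.mem_univ, if_true, V, B]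
    exact h1.symm
  -- determinant of the block-diagonal matrix
  have hdetB : B.det = ∏ a : Fin r,
      (A.map ((φ (χa a) : MonoidAlgebra R G →+* MonoidAlgebra R G))).det := by
    have hB : B = (Matrix.blockDiagonal (fun a : Fin r =>
        A.map ((φ (χa a) : MonoidAlgebra R G →+* MonoidAlgebra R G)))).submatrix
        (Equiv.prodComm (Fin r) (Fin m)) (Equiv.prodComm (Fin r) (Fin m)) := by
      refine Matrix.ext fun p q => ?_
      simp only [Matrix.submatrix_apply, Matrix.blockDiagonal_apply, Equiv.prodComm_apply,
        Prod.swap_prod_mk, Matrix.of_apply, Prod.fst_swap, Prod.snd_swap, B]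
    rw [hB, Matrix.det_submatrix_equiv_self, Matrix.det_blockDiagonal]
  -- character table is invertible
  let N : Matrix (Fin r) (Fin r) ℂ := Matrix.of fun a j => (χa a (QuotientGroup.mk (T j)) : ℂ)
  have hNdet : IsUnit N.det := by
    let N' : Matrix (Fin r) (Fin r) ℂ :=
      Matrix.of fun j b => (((χa b (QuotientGroup.mk (T j)))⁻¹ : ℂˣ) : ℂ)
    have hNN' : N * N' = (r : ℂ) • 1 := by
      refine Matrix.ext fun a b => ?_
      rw [Matrix.mul_apply]
      have step : ∀ x : Fin r, N a x * N' x b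
          = ((χa a * (χa b)⁻¹) (QuotientGroup.mk (T x)) : ℂ) := by
        intro x
        simp only [N, N', Matrix.of_apply, MonoidHom.mul_apply, MonoidHom.inv_apply,
          Units.val_mul]
      rw [Finset.sum_congr rfl fun x _ => step x]
      have heq : ∑ x : Fin r, ((χa a * (χa b)⁻¹) (QuotientGroup.mk (T x)) : ℂ)
          = ∑ q : G ⧸ H, ((χa a * (χa b)⁻¹) q : ℂ) :=
        Equiv.sum_comp eT (fun q => ((χa a * (χa b)⁻¹) q : ℂ))
      rw [heq, sum_char_eq_ite, hcardQ]
      by_cases hab : a = b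
      · subst hab
        rw [if_pos (mul_inv_cancel (χa a))]
        simp [Matrix.smul_apply, Matrix.one_apply]
      · have hne : χa a * (χa b)⁻¹ ≠ 1 :=
          fun hc => hab (e.symm.injective (mul_inv_eq_one.mp hc))
        rw [if_neg hne]
        simp [Matrix.smul_apply, Matrix.one_apply, hab]
    have hdet2 : N.det * N'.det = ((r : ℂ)) ^ r := by
      rw [← Matrix.det_mul, hNN', Matrix.det_smul, Matrix.det_one, mul_one,
        Fintype.card_fin]
    rw [isUnit_iff_ne_zero]
    intro h0
    rw [h0, zero_mul] at hdet2
    exact (pow_ne_zero r (Nat.cast_ne_zero.mpr hr0)) hdet2.symm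
  -- V is invertible
  have hdetV : IsUnit V.det := by
    set X : Matrix (Fin r × Fin m) (Fin r × Fin m) (MonoidAlgebra R G) :=
      (Matrix.kroneckerMap (· * ·) N (1 : Matrix (Fin m) (Fin m) ℂ)).map
        (algebraMap ℂ (MonoidAlgebra R G)) with hX
    set D : Matrix (Fin r × Fin m) (Fin r × Fin m) (MonoidAlgebra R G) :=
      Matrix.diagonal (fun q : Fin r × Fin m => MonoidAlgebra.of R G (T q.1)) with hD
    have hV : V = X * D := by
      refine Matrix.ext fun p q => ?_
      rw [Matrix.mul_diagonal]
      simp only [hX, Matrix.map_apply, Matrix.kroneckerMap_apply, Matrix.one_apply, V,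
        Matrix.of_apply, N]
      by_cases h : p.2 = q.2
      · rw [if_pos h, if_pos h, mul_one]
      · rw [if_neg h, if_neg h, mul_zero, map_zero, zero_mul]
    rw [hV, Matrix.det_mul]
    refine IsUnit.mul ?_ ?_
    · have hXdet : X.det = algebraMap ℂ (MonoidAlgebra R G)
          ((Matrix.kroneckerMap (· * ·) N (1 : Matrix (Fin m) (Fin m) ℂ)).det) := by
        rw [RingHom.map_det, RingHom.mapMatrix_apply, hX]
      rw [hXdet]
      refine IsUnit.map _ ?_
      rw [Matrix.det_kronecker, Matrix.det_one, one_pow, mul_one, Fintype.card_fin]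
      exact hNdet.pow _
    · rw [hD, Matrix.det_diagonal]
      exact Finset.prod_induction _ IsUnit (fun _ _ => IsUnit.mul) isUnit_one
        (fun q _ => (Group.isUnit (T q.1)).map (MonoidAlgebra.of R G))
  -- cancel V
  have hCdet : C.det = B.det := by
    have h2 : V.det * C.det = V.det * B.det := by
      rw [← Matrix.det_mul, hVC, Matrix.det_mul, mul_comm]
    exact hdetV.mul_left_cancel h2
  -- identify the blocks with the matrices in the statement
  have hAmap : ∀ χ : (G ⧸ H) →* ℂˣ, A.map ((φ χ : MonoidAlgebra R G →+* MonoidAlgebra R G)) =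
      ∑ t : Fin r, (algebraMap ℂ (MonoidAlgebra R G) (χ (QuotientGroup.mk (T t)) : ℂ)) •
        (MonoidAlgebra.of R G (T t) • (At t).map ι) := by
    intro χ
    refine Matrix.ext fun k l => ?_
    rw [hA]
    simp only [Matrix.map_apply, Matrix.sum_apply, Matrix.smul_apply, smul_eq_mul,
      RingHom.coe_coe]
    rw [map_sum]
    refine Finset.sum_congr rfl fun t _ => ?_
    rw [_root_.map_mul, hφof, hφι]
    ring
  calc ι (L A).det = C.det := by rw [RingHom.map_det, RingHom.mapMatrix_apply, hC]
    _ = B.det := hCdet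
    _ = ∏ a : Fin r,
        (A.map ((φ (χa a) : MonoidAlgebra R G →+* MonoidAlgebra R G))).det := hdetB
    _ = ∏ χ : (G ⧸ H) →* ℂˣ,
        (A.map ((φ χ : MonoidAlgebra R G →+* MonoidAlgebra R G))).det :=
      Equiv.prod_comp e.symm
        (fun χ => (A.map ((φ χ : MonoidAlgebra R G →+* MonoidAlgebra R G))).det)
    _ = _ := Finset.prod_congr rfl fun χ _ => by rw [hAmap]
end

section
/- Further generalization of Dedekind's theorem: Let G be a finite group and H an abelian subgroup. For every \(h \in H\) there exists a homogeneous polynomial \(a_h \in \mathbb{C}[x_g : g \in G]\) of degree [G:H] such that \(\Theta(G) = \prod_{\chi \in \widehat{H}} \sum_{h \in H} \chi(h)\, a_h\). If H is normal and h is conjugate to h' in G, then \(a_h = a_{h'}\). -/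
open Matrix MonoidAlgebra MvPolynomial

namespace FurtherDedekindAux

noncomputable section

variable {G : Type*} [Group G] [Fintype G] [DecidableEq G]
variable {H : Type*} [CommGroup H] [Fintype H]
variable (f : H →* G)

/-- The matrix over the monoid algebra `R[H]` whose determinant carries the `a_h`. -/
def Bmat : Matrix (G ⧸ f.range) (G ⧸ f.range) (MonoidAlgebra (MvPolynomial G ℂ) H) :=
  Matrix.of fun q q' => ∑ k : H,
    MonoidAlgebra.single k (MvPolynomial.X (q.out * f k * q'.out⁻¹))

lemma Bmat_apply_coeff (q q' : G ⧸ f.range) (h : H) :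
    (Bmat f q q' : MonoidAlgebra (MvPolynomial G ℂ) H).coeff h
      = MvPolynomial.X (q.out * f h * q'.out⁻¹) := by
  classical
  show ((∑ k : H, MonoidAlgebra.single k
      (MvPolynomial.X (q.out * f k * q'.out⁻¹)) :
      MonoidAlgebra (MvPolynomial G ℂ) H)).coeff h = _
  rw [MonoidAlgebra.coeff_sum, Finsupp.finset_sum_apply]
  simp [MonoidAlgebra.coeff_single, Finsupp.single_apply]

omit [Group G] [Fintype G] [DecidableEq G] [Fintype H] in
lemma prod_coeff_homog {ι : Type*} (s : Finset ι)
    (E : ι → MonoidAlgebra (MvPolynomial G ℂ) H)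
    (hE : ∀ i ∈ s, ∀ h : H, ((E i).coeff h).IsHomogeneous 1) (h : H) :
    ((∏ i ∈ s, E i).coeff h).IsHomogeneous s.card := by
  classical
  induction s using Finset.induction_on generalizing h with
  | empty =>
      rw [Finset.prod_empty, Finset.card_empty]
      rw [MonoidAlgebra.one_def, MonoidAlgebra.coeff_single, Finsupp.single_apply]
      split_ifs
      · exact MvPolynomial.isHomogeneous_one _ _
      · exact MvPolynomial.isHomogeneous_zero _ _ _
  | @insert a s ha ih =>
      rw [Finset.prod_insert ha, Finset.card_insert_of_notMem ha,
        MonoidAlgebra.coeff_mul, Finsupp.sum]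
      apply MvPolynomial.IsHomogeneous.sum
      intro a₁ _
      rw [Finsupp.sum]
      apply MvPolynomial.IsHomogeneous.sum
      intro a₂ _
      split_ifs
      · have := (hE a (Finset.mem_insert_self a s) a₁).mul
          (ih (fun i hi => hE i (Finset.mem_insert_of_mem hi)) a₂)
        simpa [Nat.add_comm] using this
      · exact MvPolynomial.isHomogeneous_zero _ _ _

lemma det_coeff_homog [Fintype (G ⧸ f.range)] [DecidableEq (G ⧸ f.range)] (h : H) :
    (((Bmat f).det).coeff h).IsHomogeneous (Fintype.card (G ⧸ f.range)) := by
  classical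
  rw [Matrix.det_apply, MonoidAlgebra.coeff_sum, Finsupp.finset_sum_apply]
  apply MvPolynomial.IsHomogeneous.sum
  intro σ _
  have key : ∀ h' : H, ((∏ q : G ⧸ f.range, Bmat f (σ q) q).coeff h').IsHomogeneous
      (Fintype.card (G ⧸ f.range)) := by
    intro h'
    have := prod_coeff_homog Finset.univ (fun q => Bmat f (σ q) q)
      (fun q _ h'' => by rw [Bmat_apply_coeff]; exact MvPolynomial.isHomogeneous_X _ _) h'
    simpa [Finset.card_univ] using this
  rcases Int.units_eq_one_or (Equiv.Perm.sign σ) with hs | hs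
  · rw [hs, one_smul]; exact key h
  · rw [hs]
    have : ((-1 : ℤˣ) • (∏ q : G ⧸ f.range, Bmat f (σ q) q)).coeff h
        = -((∏ q : G ⧸ f.range, Bmat f (σ q) q).coeff h) := by
      rw [Units.neg_smul, one_smul, MonoidAlgebra.coeff_neg, Finsupp.neg_apply]
    rw [this]
    exact (key h).neg


variable [Fintype (H →* ℂˣ)]

set_option maxHeartbeats 1000000 in
theorem main (hf : Function.Injective f) :
    ∃ a : H → MvPolynomial G ℂ,
      (∀ h : H, (a h).IsHomogeneous f.range.index) ∧
      (Matrix.det (Matrix.of fun g g' : G =>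
          (MvPolynomial.X (g * g'⁻¹) : MvPolynomial G ℂ)) =
        ∏ χ : H →* ℂˣ, ∑ h : H,
          algebraMap ℂ (MvPolynomial G ℂ) ((χ h : ℂ)) * a h) ∧
      (f.range.Normal → ∀ (h h' : H) (g : G), g * f h * g⁻¹ = f h' → a h = a h') := by
  classical
  letI : Fintype (G ⧸ f.range) := Fintype.ofFinite _
  haveI : NeZero ((Monoid.exponent H : ℂ)) :=
    ⟨Nat.cast_ne_zero.mpr (Monoid.exponent_ne_zero_of_finite)⟩
  obtain ⟨ψe⟩ := CommGroup.monoidHom_mulEquiv_of_hasEnoughRootsOfUnity H ℂ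
  let eH : (H →* ℂˣ) ≃ H := ψe.toEquiv
  refine ⟨fun h => (Bmat f).det.coeff h, ?_, ?_, ?_⟩
  · -- homogeneity
    intro h
    have : f.range.index = Fintype.card (G ⧸ f.range) := by
      rw [Subgroup.index, Nat.card_eq_fintype_card]
    rw [this]
    exact det_coeff_homog f h
  · -- the factorization
    -- the product equivalence
    have einj : Function.Injective
        (fun p : (G ⧸ f.range) × H => p.1.out * f p.2) := by
      rintro ⟨q, h⟩ ⟨q', h'⟩ hp
      simp only at hp
      have hq : q = q' := by
        have h1 : ((q.out * f h : G) : G ⧸ f.range) = ((q'.out * f h' : G) : G ⧸ f.range) := by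
          rw [hp]
        rwa [QuotientGroup.mk_mul_of_mem _ (MonoidHom.mem_range.mpr ⟨h, rfl⟩),
          QuotientGroup.mk_mul_of_mem _ (MonoidHom.mem_range.mpr ⟨h', rfl⟩),
          QuotientGroup.out_eq', QuotientGroup.out_eq'] at h1
      subst hq
      have : f h = f h' := mul_left_cancel hp
      exact Prod.ext rfl (hf this)
    have hcard : Fintype.card ((G ⧸ f.range) × H) = Fintype.card G := by
      have h1 : Nat.card G = Nat.card (G ⧸ f.range) * Nat.card f.range :=
        Subgroup.card_eq_card_quotient_mul_card_subgroup f.range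
      have h2 : Nat.card (f.range) = Nat.card H :=
        Nat.card_congr (MonoidHom.ofInjective hf).toEquiv.symm
      simp only [← Nat.card_eq_fintype_card] at *
      rw [Nat.card_prod, h1, h2]
    let e : ((G ⧸ f.range) × H) ≃ G := Equiv.ofBijective _
      ((Fintype.bijective_iff_injective_and_card _).mpr ⟨einj, hcard⟩)
    have he : ∀ p : (G ⧸ f.range) × H, e p = p.1.out * f p.2 := fun _ => rfl
    let R := MvPolynomial G ℂ
    let cf : (H →* ℂˣ) → (H →* R) := fun χ =>
      ((algebraMap ℂ R).toMonoidHom.comp ((Units.coeHom ℂ).comp χ))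
    let Mχ : (H →* ℂˣ) → Matrix (G ⧸ f.range) (G ⧸ f.range) R := fun χ =>
      Matrix.of fun q q' => ∑ k : H,
        MvPolynomial.X (q.out * f k * q'.out⁻¹) * algebraMap ℂ R (((χ k)⁻¹ : ℂˣ) : ℂ)
    let F : Matrix H H R := Matrix.of fun h h' => algebraMap ℂ R (((eH.symm h') h : ℂˣ) : ℂ)
    let P : Matrix ((G ⧸ f.range) × H) ((G ⧸ f.range) × H) R :=
      kroneckerMap (· * ·) (1 : Matrix (G ⧸ f.range) (G ⧸ f.range) R) F
    let D : Matrix ((G ⧸ f.range) × H) ((G ⧸ f.range) × H) R :=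
      (blockDiagonal fun χ : H →* ℂˣ => Mχ χ).submatrix
        (Equiv.prodCongr (Equiv.refl _) eH.symm) (Equiv.prodCongr (Equiv.refl _) eH.symm)
    let M' : Matrix ((G ⧸ f.range) × H) ((G ⧸ f.range) × H) R :=
      (Matrix.of fun g g' : G => (MvPolynomial.X (g * g'⁻¹) : R)).submatrix e e
    have key : M' * P = P * D := by
      apply Matrix.ext
      rintro ⟨q, h⟩ ⟨q', h'⟩
      rw [Matrix.mul_apply, Matrix.mul_apply]
      rw [Fintype.sum_prod_type, Fintype.sum_prod_type]
      -- LHS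
      have hL : ∀ q'' h'', M' (q, h) (q'', h'') * P (q'', h'') (q', h')
          = (if q'' = q' then (1 : R) else 0) *
            (MvPolynomial.X (q.out * f h * (q''.out * f h'')⁻¹) *
              algebraMap ℂ R (((eH.symm h') h'' : ℂˣ) : ℂ)) := by
        intro q'' h''
        simp only [M', P, F, Matrix.submatrix_apply, Matrix.of_apply, kroneckerMap_apply,
          Matrix.one_apply, he]
        ring
      have hR : ∀ q'' h'', P (q, h) (q'', h'') * D (q'', h'') (q', h')
          = (if h'' = h' then (1 : R) else 0) * ((if q = q'' then (1:R) else 0) *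
            (algebraMap ℂ R (((eH.symm h'') h : ℂˣ) : ℂ) * Mχ (eH.symm h'') q'' q')) := by
        intro q'' h''
        simp only [P, F, D, Matrix.submatrix_apply, Matrix.of_apply, kroneckerMap_apply,
          Matrix.one_apply, Equiv.prodCongr_apply, Equiv.coe_refl, Prod.map,
          Matrix.blockDiagonal_apply, EmbeddingLike.apply_eq_iff_eq, id]
        split_ifs <;> ring
      simp only [hL, hR, ite_mul, one_mul, zero_mul]
      rw [Finset.sum_comm]
      simp only [Finset.sum_ite_eq', Finset.sum_ite_eq, Finset.mem_univ, if_true]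
      -- LHS : sum over h'', RHS : scalar * Mχ entry
      show ∑ h'' : H, MvPolynomial.X (q.out * f h * (q'.out * f h'')⁻¹) *
          algebraMap ℂ R (((eH.symm h') h'' : ℂˣ) : ℂ)
        = algebraMap ℂ R (((eH.symm h') h : ℂˣ) : ℂ) * ∑ k : H,
            MvPolynomial.X (q.out * f k * q'.out⁻¹) *
              algebraMap ℂ R ((((eH.symm h') k)⁻¹ : ℂˣ) : ℂ)
      rw [Finset.mul_sum]
      refine (Fintype.sum_equiv ((Equiv.inv H).trans (Equiv.mulRight h)) _ _ ?_).symm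
      intro k
      simp only [Equiv.trans_apply, Equiv.inv_apply, Equiv.coe_mulRight]
      have harg : q.out * f h * (q'.out * f (k⁻¹ * h))⁻¹
          = q.out * f k * q'.out⁻¹ := by
        rw [_root_.mul_inv_rev, _root_.map_mul, map_inv]
        group
      have hsc : ((((eH.symm h') (k⁻¹ * h)) : ℂˣ) : ℂ)
          = ((((eH.symm h') k)⁻¹ : ℂˣ) : ℂ) * (((eH.symm h') h : ℂˣ) : ℂ) := by
        simp [_root_.map_mul, map_inv]
      rw [harg, hsc, RingHom.map_mul (algebraMap ℂ R)]
      ring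
    -- determinants
    have hF0 : (Matrix.of fun h h' : H => (((eH.symm h') h : ℂˣ) : ℂ)).det ≠ 0 := by
      set F₀ : Matrix H H ℂ := Matrix.of fun h h' => (((eH.symm h') h : ℂˣ) : ℂ) with hF₀def
      have hjinj : Function.Injective
          (fun h' : H => ((Units.coeHom ℂ).comp (eH.symm h') : H →* ℂ)) := by
        intro a b hab
        have : eH.symm a = eH.symm b := by
          ext x
          exact DFunLike.congr_fun hab x
        exact eH.symm.injective this
      have hli : LinearIndependent ℂ (fun h' : H => (F₀ᵀ h')) := by
        have h1 := (linearIndependent_monoidHom H ℂ).comp _ hjinj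
        exact h1
      have hunit : IsUnit F₀ᵀ := Matrix.linearIndependent_rows_iff_isUnit.mp hli
      have : IsUnit F₀.det := by
        rw [← Matrix.det_transpose]
        exact (Matrix.isUnit_iff_isUnit_det _).mp hunit
      exact this.ne_zero
    have hPdet : P.det ≠ 0 := by
      have hFmap : F = (Matrix.of fun h h' : H =>
          (((eH.symm h') h : ℂˣ) : ℂ)).map (algebraMap ℂ R) := rfl
      have hFdet : F.det = algebraMap ℂ R
          ((Matrix.of fun h h' : H => (((eH.symm h') h : ℂˣ) : ℂ)).det) := by
        rw [hFmap, ← RingHom.mapMatrix_apply, ← RingHom.map_det]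
      have hFne : F.det ≠ 0 := by
        rw [hFdet]
        intro hz
        exact hF0 ((algebraMap ℂ R).injective (by simpa using hz))
      have : P.det = (1 : Matrix (G ⧸ f.range) (G ⧸ f.range) R).det ^ Fintype.card H
          * F.det ^ Fintype.card (G ⧸ f.range) := Matrix.det_kronecker _ _
      rw [this, Matrix.det_one, one_pow, one_mul]
      exact pow_ne_zero _ hFne
    have hdetMD : M'.det = D.det := by
      have h1 : M'.det * P.det = D.det * P.det := by
        rw [← Matrix.det_mul, ← Matrix.det_mul, key, Matrix.det_mul, Matrix.det_mul, mul_comm P.det D.det]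
      exact mul_right_cancel₀ hPdet h1
    have hdetD : D.det = ∏ χ : H →* ℂˣ, (Mχ χ).det := by
      show ((blockDiagonal fun χ : H →* ℂˣ => Mχ χ).submatrix _ _).det = _
      rw [Matrix.det_submatrix_equiv_self, Matrix.det_blockDiagonal]
    -- identify Mχ with the image of Bmat
    let cf' : (H →* ℂˣ) → (H →* R) := fun χ =>
      ((algebraMap ℂ R).toMonoidHom.comp ((Units.coeHom ℂ).comp χ))
    let φ : (H →* ℂˣ) → (MonoidAlgebra R H →ₐ[R] R) := fun χ =>
      MonoidAlgebra.lift R R H (cf' χ)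
    have hMχmap : ∀ χ : H →* ℂˣ, Mχ χ = (Bmat f).map ⇑(φ χ⁻¹) := by
      intro χ
      apply Matrix.ext
      intro q q'
      show _ = (φ χ⁻¹) (∑ k : H, MonoidAlgebra.single k
        (MvPolynomial.X (q.out * f k * q'.out⁻¹)))
      rw [map_sum]
      apply Finset.sum_congr rfl
      intro k _
      rw [MonoidAlgebra.lift_single]
      show MvPolynomial.X (q.out * f k * q'.out⁻¹) * algebraMap ℂ R (((χ k)⁻¹ : ℂˣ) : ℂ)
        = _ • ((algebraMap ℂ R) (((χ⁻¹ k) : ℂˣ) : ℂ))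
      rw [smul_eq_mul, MonoidHom.inv_apply]
    have hφdet : ∀ ν : H →* ℂˣ, ((Bmat f).map ⇑(φ ν)).det
        = ∑ h : H, algebraMap ℂ R ((ν h : ℂ)) * (Bmat f).det.coeff h := by
      intro ν
      have h1 : ((Bmat f).map ⇑(φ ν)).det = (φ ν) ((Bmat f).det) := by
        have h2 := RingHom.map_det ((φ ν) : MonoidAlgebra R H →+* R) (Bmat f)
        simpa [RingHom.mapMatrix_apply] using h2.symm
      rw [h1, MonoidAlgebra.lift_apply,
        Finsupp.sum_fintype _ _ (fun h => by rw [zero_smul])]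
      apply Finset.sum_congr rfl
      intro h _
      rw [smul_eq_mul, mul_comm]
      rfl
    -- put it together
    have hfinal : (Matrix.of fun g g' : G =>
        (MvPolynomial.X (g * g'⁻¹) : MvPolynomial G ℂ)).det = M'.det :=
      (Matrix.det_submatrix_equiv_self e _).symm
    rw [hfinal, hdetMD, hdetD]
    have hstep : ∀ χ : H →* ℂˣ, (Mχ χ).det
        = ∑ h : H, algebraMap ℂ R (((χ⁻¹ : H →* ℂˣ) h : ℂ)) * (Bmat f).det.coeff h := by
      intro χ
      rw [hMχmap χ, hφdet χ⁻¹]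
    calc ∏ χ : H →* ℂˣ, (Mχ χ).det
        = ∏ χ : H →* ℂˣ, ∑ h : H,
            algebraMap ℂ R (((χ⁻¹ : H →* ℂˣ) h : ℂ)) * (Bmat f).det.coeff h :=
          Finset.prod_congr rfl fun χ _ => hstep χ
      _ = ∏ χ : H →* ℂˣ, ∑ h : H,
            algebraMap ℂ R ((χ h : ℂ)) * (Bmat f).det.coeff h := by
          rw [← Equiv.prod_comp (Equiv.inv (H →* ℂˣ))
            (fun χ => ∑ h : H, algebraMap ℂ R ((χ h : ℂ)) * (Bmat f).det.coeff h)]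
          apply Finset.prod_congr rfl
          intro χ _
          simp only [Equiv.inv_apply]
  · -- conjugation invariance
    intro hN h h' g hconj
    have hmem : ∀ m : H, g⁻¹ * f m * g ∈ f.range := fun m => by
      simpa [inv_inv] using hN.conj_mem (f m) (MonoidHom.mem_range.mpr ⟨m, rfl⟩) g⁻¹
    choose βfun hβ using fun m => MonoidHom.mem_range.mp (hmem m)
    have hβmul : ∀ m n : H, βfun (m * n) = βfun m * βfun n := by
      intro m n
      apply hf
      rw [_root_.map_mul, hβ, hβ, hβ, _root_.map_mul]
      group
    let β : H →* H := MonoidHom.mk' βfun hβmul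
    have hβinj : Function.Injective β := by
      intro a b hab
      apply hf
      have h1 : f (βfun a) = f (βfun b) := congrArg f hab
      rw [hβ, hβ] at h1
      have := mul_right_cancel h1
      exact mul_left_cancel this
    let βμ : H ≃* H := MulEquiv.ofBijective β (Finite.injective_iff_bijective.mp hβinj)
    -- permutation of cosets
    have hpinj : Function.Injective
        (fun q : G ⧸ f.range => ((q.out * g⁻¹ : G) : G ⧸ f.range)) := by
      intro q q' hqq
      simp only at hqq
      have h1 : (q.out * g⁻¹)⁻¹ * (q'.out * g⁻¹) ∈ f.range := (QuotientGroup.eq).mp hqq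
      have h2 : g⁻¹ * ((q.out * g⁻¹)⁻¹ * (q'.out * g⁻¹)) * (g⁻¹)⁻¹ ∈ f.range :=
        hN.conj_mem _ h1 g⁻¹
      have h3 : q.out⁻¹ * q'.out ∈ f.range := by
        have : g⁻¹ * ((q.out * g⁻¹)⁻¹ * (q'.out * g⁻¹)) * (g⁻¹)⁻¹
            = q.out⁻¹ * q'.out := by group
        rwa [this] at h2
      have h4 : ((q.out : G) : G ⧸ f.range) = ((q'.out : G) : G ⧸ f.range) :=
        (QuotientGroup.eq).mpr h3
      rwa [QuotientGroup.out_eq', QuotientGroup.out_eq'] at h4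
    let πe : (G ⧸ f.range) ≃ (G ⧸ f.range) :=
      Equiv.ofBijective _ (Finite.injective_iff_bijective.mp hpinj)
    have hπ : ∀ q : G ⧸ f.range, (πe q : G ⧸ f.range) = ((q.out * g⁻¹ : G) : G ⧸ f.range) :=
      fun _ => rfl
    have hout : ∀ q : G ⧸ f.range, ∃ uq : H, (πe q).out = q.out * g⁻¹ * f uq := by
      intro q
      have h1 : ((q.out * g⁻¹ : G) : G ⧸ f.range) = (((πe q).out : G) : G ⧸ f.range) := by
        rw [QuotientGroup.out_eq', hπ]
      obtain ⟨uq, huq⟩ := MonoidHom.mem_range.mp ((QuotientGroup.eq).mp h1)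
      exact ⟨uq, by rw [huq]; group⟩
    choose u hu using hout
    -- the ring homomorphism induced by βμ.symm
    let ψ : MonoidAlgebra (MvPolynomial G ℂ) H →+* MonoidAlgebra (MvPolynomial G ℂ) H :=
      MonoidAlgebra.mapDomainRingHom (MvPolynomial G ℂ) (βμ.symm : H ≃* H)
    have hψsingle : ∀ (k : H) (c : MvPolynomial G ℂ),
        ψ (MonoidAlgebra.single k c) = MonoidAlgebra.single (βμ.symm k) c := by
      intro k c
      show MonoidAlgebra.mapDomain _ _ = _
      rw [MonoidAlgebra.mapDomain_single]
      rfl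
    have hβcoe : ∀ m : H, (βμ : H → H) m = βfun m := fun _ => rfl
    -- matrix identity
    have hBmat : (Bmat f).submatrix ⇑πe ⇑πe
        = Matrix.diagonal (fun q => MonoidAlgebra.single ((u q)⁻¹ : H) (1 : MvPolynomial G ℂ))
          * ((Bmat f).map ⇑ψ)
          * Matrix.diagonal (fun q => MonoidAlgebra.single (u q) (1 : MvPolynomial G ℂ)) := by
      apply Matrix.ext
      intro q q'
      rw [Matrix.mul_apply]
      have hterm : ∀ q'', (Matrix.diagonal (fun q => MonoidAlgebra.single ((u q)⁻¹ : H)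
            (1 : MvPolynomial G ℂ)) * ((Bmat f).map ⇑ψ)) q q''
            * Matrix.diagonal (fun q => MonoidAlgebra.single (u q) (1 : MvPolynomial G ℂ)) q'' q'
          = if q'' = q' then
              MonoidAlgebra.single ((u q)⁻¹ : H) (1 : MvPolynomial G ℂ)
                * ψ (Bmat f q q') * MonoidAlgebra.single (u q') (1 : MvPolynomial G ℂ)
            else 0 := by
        intro q''
        rw [Matrix.mul_apply]
        by_cases hc : q'' = q'
        · subst hc
          rw [if_pos rfl, Matrix.diagonal_apply_eq]
          congr 1
          rw [Finset.sum_eq_single q]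
          · rw [Matrix.diagonal_apply_eq, Matrix.map_apply]
          · intro b _ hb
            rw [Matrix.diagonal_apply_ne _ (Ne.symm hb), zero_mul]
          · intro hq; exact absurd (Finset.mem_univ q) hq
        · rw [if_neg hc, Matrix.diagonal_apply_ne _ hc, mul_zero]
      rw [Finset.sum_congr rfl (fun q'' _ => hterm q''), Finset.sum_ite_eq',
        if_pos (Finset.mem_univ q')]
      -- now the entry computation
      show Bmat f (πe q) (πe q') = _
      have hψB : ψ (Bmat f q q') = ∑ k : H, MonoidAlgebra.single (βμ.symm k)
          (MvPolynomial.X (q.out * f k * q'.out⁻¹)) := by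
        show ψ (∑ k : H, MonoidAlgebra.single k (MvPolynomial.X (q.out * f k * q'.out⁻¹))) = _
        rw [map_sum]
        exact Finset.sum_congr rfl fun k _ => hψsingle _ _
      rw [hψB, Finset.mul_sum, Finset.sum_mul]
      show ∑ k : H, MonoidAlgebra.single k
          (MvPolynomial.X ((πe q).out * f k * ((πe q').out)⁻¹)) = _
      refine Fintype.sum_equiv
        (((Equiv.mulLeft (u q)).trans (Equiv.mulRight ((u q')⁻¹ : H))).trans βμ.toEquiv) _ _ ?_
      intro k
      simp only [Equiv.trans_apply, Equiv.coe_mulLeft, Equiv.coe_mulRight]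
      rw [MonoidAlgebra.single_mul_single, MonoidAlgebra.single_mul_single,
        one_mul, mul_one]
      have hcoeEq : (⇑(βμ.toEquiv) : H → H) = βfun := rfl
      have hsymmβ : ∀ x : H, βμ.symm (βfun x) = x := fun x => βμ.symm_apply_apply x
      rw [hcoeEq, hsymmβ]
      have harg : (πe q).out * f k * ((πe q').out)⁻¹
          = q.out * f (βfun (u q * k * (u q')⁻¹)) * q'.out⁻¹ := by
        rw [hu q, hu q', hβ]
        simp only [_root_.map_mul, map_inv]
        group
      congr 1
      · group
      · rw [harg]
    -- conclude on determinants
    have hdet1 : (Bmat f).det = ψ ((Bmat f).det) := by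
      have h1 : (Bmat f).det = ((Bmat f).submatrix ⇑πe ⇑πe).det :=
        (Matrix.det_submatrix_equiv_self πe _).symm
      conv_lhs => rw [h1, hBmat]
      rw [Matrix.det_mul, Matrix.det_mul, Matrix.det_diagonal,
        Matrix.det_diagonal]
      have h2 : (((Bmat f).map ⇑ψ)).det = ψ ((Bmat f).det) := by
        have h3 := RingHom.map_det ψ (Bmat f)
        simpa [RingHom.mapMatrix_apply] using h3.symm
      rw [h2]
      have h4 : ∀ q : G ⧸ f.range,
          MonoidAlgebra.single ((u q)⁻¹ : H) (1 : MvPolynomial G ℂ)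
            * MonoidAlgebra.single (u q) (1 : MvPolynomial G ℂ) = 1 := by
        intro q
        rw [MonoidAlgebra.single_mul_single, inv_mul_cancel, one_mul,
          MonoidAlgebra.one_def]
      have h5 : (∏ q : G ⧸ f.range,
          (MonoidAlgebra.single ((u q)⁻¹ : H) (1 : MvPolynomial G ℂ)
            * MonoidAlgebra.single (u q) (1 : MvPolynomial G ℂ))) = 1 := by
        rw [Finset.prod_congr rfl (fun q _ => h4 q), Finset.prod_const_one]
      rw [mul_comm (∏ q : G ⧸ f.range,
          MonoidAlgebra.single ((u q)⁻¹ : H) (1 : MvPolynomial G ℂ)) (ψ ((Bmat f).det)),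
        mul_assoc, ← Finset.prod_mul_distrib, h5, mul_one]
    -- extract coefficients
    have hcoeff : ∀ m : H, (Bmat f).det.coeff m = (Bmat f).det.coeff ((βμ : H → H) m) := by
      intro m
      conv_lhs => rw [hdet1]
      show (Finsupp.mapDomain (⇑(βμ.symm)) ((Bmat f).det.coeff)) m = _
      have : (⇑(βμ.symm) : H → H) = ⇑(βμ.symm.toEquiv) := rfl
      rw [this, Finsupp.mapDomain_equiv_apply]
      simp
    have hβh' : (βμ : H → H) h' = h := by
      apply hf
      rw [hβcoe, hβ, ← hconj]
      group
    rw [← hβh']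
    exact (hcoeff h').symm

end

end FurtherDedekindAux

/-- **Further generalization of Dedekind's theorem.** Let `G` be a finite group and `H`
an abelian subgroup (the range of an injective hom `f : H →* G`). Then there are
homogeneous polynomials `a_h ∈ ℂ[x_g : g ∈ G]` of degree `[G:H]` such that
`Θ(G) = ∏_{χ ∈ Ĥ} ∑_{h ∈ H} χ(h) a_h`.
Moreover, if `H` is normal in `G` and `h, h'` are conjugate in `G`, then `a_h = a_h'`. -/
theorem further_generalization_dedekind {G : Type*} [Group G] [Fintype G] [DecidableEq G]
    {H : Type*} [CommGroup H] [Fintype H] [Fintype (H →* ℂˣ)]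
    (f : H →* G) (hf : Function.Injective f) :
    ∃ a : H → MvPolynomial G ℂ,
      (∀ h : H, (a h).IsHomogeneous f.range.index) ∧
      (Matrix.det (Matrix.of fun g g' : G =>
          (MvPolynomial.X (g * g'⁻¹) : MvPolynomial G ℂ)) =
        ∏ χ : H →* ℂˣ, ∑ h : H,
          algebraMap ℂ (MvPolynomial G ℂ) ((χ h : ℂ)) * a h) ∧
      (f.range.Normal → ∀ (h h' : H) (g : G), g * f h * g⁻¹ = f h' → a h = a h') :=
  FurtherDedekindAux.main f hf
end

section
/- Let G be a finite group and H an abelian subgroup. Then every irreducible complex representation \(\varphi\) of G satisfies \(\deg \varphi \le [G:H]\). -/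
open Module

lemma common_eigenvector {V : Type*} [AddCommGroup V] [Module ℂ V] [FiniteDimensional ℂ V]
    (l : List (Module.End ℂ V)) (hcomm : ∀ f ∈ l, ∀ g ∈ l, Commute f g) :
    ∀ W : Submodule ℂ V, W ≠ ⊥ → (∀ f ∈ l, ∀ v ∈ W, f v ∈ W) →
    ∃ v ∈ W, v ≠ 0 ∧ ∀ f ∈ l, ∃ μ : ℂ, f v = μ • v := by
  induction l with
  | nil =>
    intro W hW _
    obtain ⟨v, hv, hv0⟩ := W.ne_bot_iff.mp hW
    exact ⟨v, hv, hv0, by simp⟩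
  | cons f l ih =>
    intro W hW hmaps
    have hfW : ∀ v ∈ W, f v ∈ W := hmaps f (List.mem_cons_self)
    haveI : Nontrivial W := Submodule.nontrivial_iff_ne_bot.mpr hW
    obtain ⟨μ, hμ⟩ := Module.End.exists_eigenvalue (f.restrict hfW)
    obtain ⟨w, hw⟩ := hμ.exists_hasEigenvector
    have hweq : f (w : V) = μ • (w : V) := by
      have := congrArg (Subtype.val) hw.apply_eq_smul
      simpa [LinearMap.restrict_coe_apply] using this
    set E : Submodule ℂ V := W ⊓ LinearMap.ker (f - μ • (1 : Module.End ℂ V)) with hE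
    have hmemE : ∀ v : V, v ∈ E ↔ v ∈ W ∧ f v = μ • v := by
      intro v
      simp [hE, LinearMap.mem_ker, sub_eq_zero, LinearMap.sub_apply]
    have hEbot : E ≠ ⊥ := by
      refine E.ne_bot_iff.mpr ⟨(w : V), (hmemE _).mpr ⟨w.2, hweq⟩, ?_⟩
      exact fun h => hw.right (Subtype.ext h)
    have hEmaps : ∀ g ∈ l, ∀ v ∈ E, g v ∈ E := by
      intro g hg v hv
      obtain ⟨hvW, hvf⟩ := (hmemE v).mp hv
      refine (hmemE _).mpr ⟨hmaps g (List.mem_cons_of_mem f hg) v hvW, ?_⟩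
      have hc : f (g v) = g (f v) := by
        have h2 := hcomm f (List.mem_cons_self) g (List.mem_cons_of_mem f hg)
        have := congrFun (congrArg DFunLike.coe h2) v
        simpa [Module.End.mul_apply] using this
      rw [hc, hvf, map_smul]
    obtain ⟨v, hvE, hv0, hvl⟩ := ih (fun a ha b hb =>
      hcomm a (List.mem_cons_of_mem f ha) b (List.mem_cons_of_mem f hb)) E hEbot hEmaps
    obtain ⟨hvW, hvf⟩ := (hmemE v).mp hvE
    refine ⟨v, hvW, hv0, ?_⟩
    intro g hg
    rcases List.mem_cons.mp hg with rfl | hg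
    · exact ⟨μ, hvf⟩
    · exact hvl g hg

/-- A matrix representation `ρ : G →* GL(n, ℂ)` is irreducible: the space is nonzero and
the only invariant subspaces are `⊥` and `⊤`. -/
def IsIrrep {G : Type*} [Group G] {n : ℕ} (ρ : G →* Matrix.GeneralLinearGroup (Fin n) ℂ) :
    Prop :=
  0 < n ∧ ∀ W : Submodule ℂ (Fin n → ℂ),
    (∀ g : G, ∀ v ∈ W, Matrix.mulVec (ρ g : Matrix (Fin n) (Fin n) ℂ) v ∈ W) →
      W = ⊥ ∨ W = ⊤


/-- If `G` is a finite group and `H` an abelian subgroup, then the degree of any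
irreducible complex representation of `G` is at most the index `[G:H]`. -/
theorem degree_le_index_of_abelian_subgroup {G : Type*} [Group G] [Fintype G]
    (H : Subgroup G) (hab : ∀ a b : ↥H, a * b = b * a)
    (n : ℕ) (ρ : G →* Matrix.GeneralLinearGroup (Fin n) ℂ) (hρ : IsIrrep ρ) :
    n ≤ H.index := by
  classical
  obtain ⟨hn, hirr⟩ := hρ
  -- endomorphisms associated to group elements
  set F : G → Module.End ℂ (Fin n → ℂ) :=
    fun g => Matrix.mulVecLin (ρ g : Matrix (Fin n) (Fin n) ℂ) with hF
  have hFapp : ∀ g v, F g v = Matrix.mulVec (ρ g : Matrix (Fin n) (Fin n) ℂ) v := fun _ _ => rfl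
  have hFmul : ∀ g g' : G, F (g * g') = F g * F g' := by
    intro g g'
    have hc : (ρ (g * g') : Matrix (Fin n) (Fin n) ℂ) =
        (ρ g : Matrix (Fin n) (Fin n) ℂ) * (ρ g' : Matrix (Fin n) (Fin n) ℂ) := by
      rw [map_mul]; rfl
    simp only [hF]
    rw [hc, Matrix.mulVecLin_mul]
    rfl
  -- the list of endomorphisms for elements of H
  set l : List (Module.End ℂ (Fin n → ℂ)) :=
    (Finset.univ : Finset H).toList.map (fun h : H => F (h : G)) with hl
  have hcomm : ∀ f ∈ l, ∀ g ∈ l, Commute f g := by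
    intro f hf g hg
    simp only [hl, List.mem_map] at hf hg
    obtain ⟨a, -, rfl⟩ := hf
    obtain ⟨b, -, rfl⟩ := hg
    show F (a : G) * F (b : G) = F (b : G) * F (a : G)
    rw [← hFmul, ← hFmul]
    congr 1
    exact_mod_cast hab a b
  obtain ⟨v, -, hv0, hvl⟩ := common_eigenvector l hcomm ⊤ (by
      refine (Submodule.ne_bot_iff ⊤).mpr
        ⟨Pi.single (⟨0, hn⟩ : Fin n) (1 : ℂ), trivial, fun h0 => ?_⟩
      have := congrFun h0 ⟨0, hn⟩
      simp [Pi.single_eq_same] at this)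
    (by intro f _ w _; trivial)
  -- eigenvalues for elements of H
  have hHeig : ∀ h : H, ∃ μ : ℂ, F (h : G) v = μ • v := by
    intro h
    exact hvl (F (h : G)) (by
      simp only [hl, List.mem_map]
      exact ⟨h, by simp [Finset.mem_toList], rfl⟩)
  -- the span of the G-orbit of v
  set S : Submodule ℂ (Fin n → ℂ) := Submodule.span ℂ (Set.range fun g : G => F g v) with hS
  have hSinv : ∀ g : G, ∀ w ∈ S, Matrix.mulVec (ρ g : Matrix (Fin n) (Fin n) ℂ) w ∈ S := by
    intro g w hw
    have : Submodule.map (F g) S ≤ S := by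
      rw [hS, Submodule.map_span]
      refine Submodule.span_mono ?_
      rintro x ⟨y, ⟨g', rfl⟩, rfl⟩
      refine ⟨g * g', ?_⟩
      show F (g * g') v = F g (F g' v)
      rw [hFmul]; rfl
    exact this ⟨w, hw, rfl⟩
  have hSne : S ≠ ⊥ := by
    refine S.ne_bot_iff.mpr ⟨v, ?_, hv0⟩
    refine Submodule.subset_span ⟨1, ?_⟩
    simp [hF, Matrix.mulVecLin]
  have hStop : S = ⊤ := (hirr S hSinv).resolve_left hSne
  -- S is contained in the span of the coset-representative images
  set T : Submodule ℂ (Fin n → ℂ) :=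
    Submodule.span ℂ (Set.range fun q : G ⧸ H => F (Quotient.out q) v) with hT
  have hST : S ≤ T := by
    rw [hS]
    refine Submodule.span_le.mpr ?_
    rintro x ⟨g, rfl⟩
    obtain ⟨h, hh⟩ := QuotientGroup.mk_out_eq_mul H g
    obtain ⟨μ, hμ⟩ := hHeig h⁻¹
    have hg : g = Quotient.out ((g : G ⧸ H)) * ((h⁻¹ : H) : G) := by
      rw [hh, mul_assoc, ← Subgroup.coe_mul, mul_inv_cancel, Subgroup.coe_one, mul_one]
    have heq : F g v = μ • F (Quotient.out ((g : G ⧸ H))) v := by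
      conv_lhs => rw [hg]
      rw [hFmul, Module.End.mul_apply, hμ, map_smul]
    show F g v ∈ (T : Set (Fin n → ℂ))
    rw [heq]
    exact Submodule.smul_mem _ _ (Submodule.subset_span ⟨(g : G ⧸ H), rfl⟩)
  have hTtop : T = ⊤ := top_le_iff.mp (hStop ▸ hST)
  -- finrank bound
  have h1 : Module.finrank ℂ (Fin n → ℂ) = n := by simp
  have h2 : Module.finrank ℂ T ≤ Fintype.card (G ⧸ H) := by
    rw [hT]
    refine le_trans (finrank_span_le_card _) ?_
    rw [Set.toFinset_range]
    exact Finset.card_image_le.trans (by simp)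
  rw [hTtop] at h2
  rw [finrank_top] at h2
  rw [h1] at h2
  rwa [Subgroup.index_eq_card, Nat.card_eq_fintype_card]
end
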